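/- arXiv:2311.04045 — 8 statements merged into one kernel-verified Lean document; each statement's English description precedes it below -/
import Mathlib

section
/- Let φ:(0,∞)→(0,∞) be twice continuously differentiable and let h(x) := log(1/φ(e^{−eˣ})) for x ∈ ℝ. Assume that h'(x) → δ and h''(x) → 0 as x → ∞ for some δ ∈ [0,1], that xφ(e^{−x}) → c ∈ (0,∞] as x → ∞, and that δ = 1 whenever c < ∞. Then, with the convention 1/∞ = 0, one has φ'(1/u)/(u·φ(1/u)²) → 1/c and φ''(1/u)/(u²·φ(1/u)²) → −1/c as u → ∞. -/
/-!
Write `ψ(t) = t φ'(t) / φ(t)` for the elasticity of `φ` and substitute `x = log (log u)`, so that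
`eˣ = log u` and `exp (-eˣ) = 1/u`. The chain rule gives `h' = log u · ψ(1/u)` and
`h'' = log u · ψ - (log u)² (ψ - ψ² + u⁻² φ''(1/u) / φ(1/u))`. Solving for `φ'` and `φ''`, both
quotients of the theorem become expressions in `h'`, `h''` and `1 / log u` multiplied by
`1 / (log u · φ(1/u)) → 1/c`; their limits are `δ/c` and `-δ/c`, and `δ/c = 1/c` because `δ = 1`
unless `c = ∞`.
-/

open Real Filter Set Topology

noncomputable def elasticity (φ : ℝ → ℝ) (t : ℝ) : ℝ := t * deriv φ t / φ t

section
variable {φ : ℝ → ℝ}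

lemma hasDerivAt_elasticity {t : ℝ} (ht : t ≠ 0) (hφ : DifferentiableAt ℝ φ t)
    (hφ' : DifferentiableAt ℝ (deriv φ) t) (hne : φ t ≠ 0) :
    HasDerivAt (elasticity φ)
      ((elasticity φ t - elasticity φ t ^ 2 + t ^ 2 * deriv (deriv φ) t / φ t) / t) t := by
  refine (((hasDerivAt_id t).mul hφ'.hasDerivAt).div hφ.hasDerivAt hne).congr_deriv ?_
  simp only [elasticity, id, Pi.mul_apply]
  field_simp
  ring

lemma hasDerivAt_exp_neg_exp (x : ℝ) :
    HasDerivAt (fun x => exp (-exp x)) (-(exp x * exp (-exp x))) x := by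
  exact (hasDerivAt_exp x).neg.exp.congr_deriv (by simp only [Pi.neg_apply]; ring)

lemma hasDerivAt_exp_mul_comp_exp_neg_exp {g : ℝ → ℝ} {g' x : ℝ}
    (hg : HasDerivAt g g' (exp (-exp x))) :
    HasDerivAt (fun x => exp x * g (exp (-exp x)))
      (exp x * g (exp (-exp x)) - exp x ^ 2 * exp (-exp x) * g') x := by
  refine ((hasDerivAt_exp x).mul (hg.comp x (hasDerivAt_exp_neg_exp x))).congr_deriv ?_
  simp only [Function.comp_apply]
  ring

lemma deriv_log_one_div_comp_exp_neg_exp (hφ : DifferentiableOn ℝ φ (Ioi 0))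
    (hpos : ∀ t > 0, 0 < φ t) :
    deriv (fun x => log (1 / φ (exp (-exp x)))) = fun x => exp x * elasticity φ (exp (-exp x)) := by
  funext x
  have hT := exp_pos (-exp x)
  have h : HasDerivAt (fun x => -log (φ (exp (-exp x))))
      (-(deriv φ (exp (-exp x)) * -(exp x * exp (-exp x)) / φ (exp (-exp x)))) x :=
    (((hφ.differentiableAt (Ioi_mem_nhds hT)).hasDerivAt.comp x
      (hasDerivAt_exp_neg_exp x)).log (hpos _ hT).ne').neg
  simp only [one_div, log_inv]
  rw [h.deriv, elasticity]
  field_simp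

lemma deriv_deriv_log_one_div_comp_exp_neg_exp (hφ : ContDiffOn ℝ 2 φ (Ioi 0))
    (hpos : ∀ t > 0, 0 < φ t) :
    deriv (deriv fun x => log (1 / φ (exp (-exp x)))) = fun x =>
      exp x * elasticity φ (exp (-exp x)) - exp x ^ 2 * (elasticity φ (exp (-exp x))
        - elasticity φ (exp (-exp x)) ^ 2
        + exp (-exp x) ^ 2 * deriv (deriv φ) (exp (-exp x)) / φ (exp (-exp x))) := by
  funext x
  have hT := Ioi_mem_nhds (exp_pos (-exp x))
  have hd := (hφ.differentiableOn two_ne_zero).differentiableAt hT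
  have hd' := ((hφ.deriv_of_isOpen isOpen_Ioi (by norm_num)).differentiableOn
    one_ne_zero).differentiableAt hT
  rw [deriv_log_one_div_comp_exp_neg_exp (hφ.differentiableOn two_ne_zero) hpos,
    (hasDerivAt_exp_mul_comp_exp_neg_exp
      (hasDerivAt_elasticity (exp_pos _).ne' hd hd' (hpos _ (exp_pos _)).ne')).deriv]
  field_simp

variable {δ μ : ℝ}

lemma tendsto_deriv_div_of_elasticity (hpos : ∀ t > 0, 0 < φ t)
    (ha : Tendsto (fun u => log u * elasticity φ u⁻¹) atTop (𝓝 δ))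
    (hm : Tendsto (fun u => (log u * φ u⁻¹)⁻¹) atTop (𝓝 μ)) :
    Tendsto (fun u => deriv φ (1 / u) / (u * φ (1 / u) ^ 2)) atTop (𝓝 (δ * μ)) := by
  refine (ha.mul hm).congr' ?_
  filter_upwards [eventually_gt_atTop 1] with u hu
  have hl := (log_pos hu).ne'
  have hφu := (hpos u⁻¹ (by positivity)).ne'
  simp only [elasticity, one_div]
  field_simp

lemma tendsto_deriv_deriv_div_of_elasticity (hpos : ∀ t > 0, 0 < φ t)
    (ha : Tendsto (fun u => log u * elasticity φ u⁻¹) atTop (𝓝 δ))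
    (hb : Tendsto (fun u => log u * elasticity φ u⁻¹ - log u ^ 2 * (elasticity φ u⁻¹
      - elasticity φ u⁻¹ ^ 2 + u⁻¹ ^ 2 * deriv (deriv φ) u⁻¹ / φ u⁻¹)) atTop (𝓝 0))
    (hm : Tendsto (fun u => (log u * φ u⁻¹)⁻¹) atTop (𝓝 μ)) :
    Tendsto (fun u => deriv (deriv φ) (1 / u) / (u ^ 2 * φ (1 / u) ^ 2)) atTop
      (𝓝 (-(δ * μ))) := by
  have hL := tendsto_inv_atTop_zero.comp tendsto_log_atTop
  have hlim := ((((ha.sub hb).mul hL).sub ha).add ((ha.pow 2).mul hL)).mul hm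
  rw [show ((δ - 0) * 0 - δ + δ ^ 2 * 0) * μ = -(δ * μ) by ring] at hlim
  refine hlim.congr' ?_
  filter_upwards [eventually_gt_atTop 1] with u hu
  have hl := (log_pos hu).ne'
  have hu0 : u ≠ 0 := by positivity
  have hφu := (hpos u⁻¹ (by positivity)).ne'
  simp only [elasticity, one_div, Function.comp_apply]
  generalize φ u⁻¹ = P at hφu ⊢
  field_simp
  ring

end

lemma tendsto_log_inv_of_tendsto_exp_neg {α : Type*} {l : Filter α} {G : ℝ → ℝ → α}
    (h : Tendsto (fun x => G x (exp (-x))) atTop l) :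
    Tendsto (fun u => G (log u) u⁻¹) atTop l :=
  tendsto_comp_exp_atTop.1 (by simpa only [log_exp, exp_neg] using h)

lemma tendsto_log_inv_of_tendsto_exp_exp_neg_exp {α : Type*} {l : Filter α} {G : ℝ → ℝ → α}
    (h : Tendsto (fun x => G (exp x) (exp (-exp x))) atTop l) :
    Tendsto (fun u => G (log u) u⁻¹) atTop l :=
  tendsto_log_inv_of_tendsto_exp_neg (tendsto_comp_exp_atTop.1 h)

lemma tendsto_inv_of_tendsto_ofReal {α : Type*} {l : Filter α} {f : α → ℝ} {c : ENNReal}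
    (hc : c ≠ 0) (hf : Tendsto (fun x => ENNReal.ofReal (f x)) l (𝓝 c))
    (hf0 : ∀ᶠ x in l, 0 ≤ f x) : Tendsto (fun x => (f x)⁻¹) l (𝓝 c⁻¹.toReal) := by
  refine ((ENNReal.tendsto_toReal (ENNReal.inv_ne_top.mpr hc)).comp hf.inv).congr' ?_
  filter_upwards [hf0] with x hx
  simp [ENNReal.toReal_inv, ENNReal.toReal_ofReal hx]

theorem stmt_1_general
    (φ : ℝ → ℝ) (hφpos : ∀ x > (0:ℝ), 0 < φ x)
    (hφC2 : ContDiffOn ℝ 2 φ (Ioi 0))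
    (δ : ℝ)
    (hh1 : Tendsto (deriv (fun x => Real.log (1 / φ (Real.exp (-(Real.exp x))))))
      atTop (𝓝 δ))
    (hh2 : Tendsto (deriv (deriv (fun x => Real.log (1 / φ (Real.exp (-(Real.exp x)))))))
      atTop (𝓝 0))
    (c : ENNReal) (hc0 : 0 < c)
    (hc : Tendsto (fun x => ENNReal.ofReal (x * φ (Real.exp (-x)))) atTop (𝓝 c))
    (hδc : c < ⊤ → δ = 1) :
    Tendsto (fun u => deriv φ (1 / u) / (u * (φ (1 / u)) ^ 2)) atTop (𝓝 ((1 / c).toReal)) ∧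
    Tendsto (fun u => deriv (deriv φ) (1 / u) / (u ^ 2 * (φ (1 / u)) ^ 2)) atTop
      (𝓝 (-(1 / c).toReal)) := by
  rw [deriv_log_one_div_comp_exp_neg_exp (hφC2.differentiableOn two_ne_zero) hφpos] at hh1
  rw [deriv_deriv_log_one_div_comp_exp_neg_exp hφC2 hφpos] at hh2
  have ha := tendsto_log_inv_of_tendsto_exp_exp_neg_exp
    (G := fun L t => L * elasticity φ t) hh1
  have hb := tendsto_log_inv_of_tendsto_exp_exp_neg_exp (G := fun L t => L * elasticity φ t
    - L ^ 2 * (elasticity φ t - elasticity φ t ^ 2 + t ^ 2 * deriv (deriv φ) t / φ t)) hh2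
  have hm : Tendsto (fun u => (log u * φ u⁻¹)⁻¹) atTop (𝓝 (1 / c).toReal) := by
    rw [one_div]
    refine tendsto_inv_of_tendsto_ofReal hc0.ne'
      (tendsto_log_inv_of_tendsto_exp_neg (G := fun x t => ENNReal.ofReal (x * φ t)) hc) ?_
    filter_upwards [eventually_gt_atTop 1] with u hu
    exact (mul_pos (log_pos hu) (hφpos _ (by positivity))).le
  have hδ : δ * (1 / c).toReal = (1 / c).toReal := by
    rcases eq_or_ne c ⊤ with rfl | hct
    · simp
    · rw [hδc hct.lt_top, one_mul]
  rw [← hδ]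
  exact ⟨tendsto_deriv_div_of_elasticity hφpos ha hm,
    tendsto_deriv_deriv_div_of_elasticity hφpos ha hb hm⟩

/-- key derivative limits for the smooth equivalent function φ. -/
theorem stmt_1
    (φ : ℝ → ℝ) (hφpos : ∀ x > (0:ℝ), 0 < φ x)
    (hφC2 : ContDiffOn ℝ 2 φ (Ioi 0))
    (δ : ℝ) (hδ0 : 0 ≤ δ) (hδ1 : δ ≤ 1)
    (hh1 : Tendsto (deriv (fun x => Real.log (1 / φ (Real.exp (-(Real.exp x))))))
      atTop (𝓝 δ))
    (hh2 : Tendsto (deriv (deriv (fun x => Real.log (1 / φ (Real.exp (-(Real.exp x)))))))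
      atTop (𝓝 0))
    (c : ENNReal) (hc0 : 0 < c)
    (hc : Tendsto (fun x => ENNReal.ofReal (x * φ (Real.exp (-x)))) atTop (𝓝 c))
    (hδc : c < ⊤ → δ = 1) :
    Tendsto (fun u => deriv φ (1 / u) / (u * (φ (1 / u)) ^ 2)) atTop (𝓝 ((1 / c).toReal)) ∧
    Tendsto (fun u => deriv (deriv φ) (1 / u) / (u ^ 2 * (φ (1 / u)) ^ 2)) atTop
      (𝓝 (-(1 / c).toReal)) :=
  stmt_1_general φ hφpos hφC2 δ hh1 hh2 c hc0 hc hδc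
end

section
/- Let φ:(0,∞)→(0,∞) be a strictly increasing bijection of (0,∞) onto (0,∞) such that x ↦ xφ(e^{−x}) is nondecreasing on (0,∞). Then for every c₀ > 0, the infimum over x > 0 of φ^{-1}(1/(xt)) / φ^{-1}(1/((x+c₀)t)) tends to ∞ as t → ∞; that is, for every M > 0 there exists T > 0 such that for all t ≥ T and all x > 0, φ^{-1}(1/(xt)) ≥ M·φ^{-1}(1/((x+c₀)t)). -/
open Real MeasureTheory Filter Set Topology

/-!
Write `u = φ⁻¹(1/((x+c₀)t)) = e^{-s}` and `v = φ⁻¹(1/(xt)) = e^{-r}`, and let `ψ(s) = s φ(e^{-s})`.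
Since `ψ` is nondecreasing, `φ(e^{-S}) ≥ ψ(L)/S` for `S ≥ L`; choosing `t ≥ 1/(c₀ φ(e^{-L}))` this
forces `s ≥ (x+c₀)L/c₀`. Comparing `ψ(r) ≤ ψ(s)` with `φ(e^{-r}) x = φ(e^{-s}) (x+c₀) = 1/t` gives
`r (x+c₀) ≤ s x`, hence `s - r ≥ s c₀/(x+c₀) ≥ L`, i.e. `v ≥ e^L u`.
-/

section

variable {φ φinv : ℝ → ℝ}

theorem StrictMonoOn.rightInv_le_iff (hφ : StrictMonoOn φ (Ioi 0))
    (hinv : ∀ a > (0:ℝ), φ (φinv a) = a ∧ 0 < φinv a) {a z : ℝ} (ha : 0 < a) (hz : 0 < z) :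
    φinv a ≤ z ↔ a ≤ φ z := by
  conv_rhs => rw [← (hinv a ha).1]
  exact (hφ.le_iff_le (hinv a ha).2 hz).symm

theorem StrictMonoOn.rightInv_le_rightInv (hφ : StrictMonoOn φ (Ioi 0))
    (hinv : ∀ a > (0:ℝ), φ (φinv a) = a ∧ 0 < φinv a) {a b : ℝ} (ha : 0 < a) (hab : a ≤ b) :
    φinv a ≤ φinv b := by
  have hb := ha.trans_le hab
  rw [hφ.rightInv_le_iff hinv ha (hinv b hb).2, (hinv b hb).1]
  exact hab

theorem div_le_apply_exp_neg_of_monotoneOn (hψ : MonotoneOn (fun s => s * φ (exp (-s))) (Ioi 0))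
    {L S : ℝ} (hL : 0 < L) (hLS : L ≤ S) :
    L * φ (exp (-L)) / S ≤ φ (exp (-S)) := by
  have hS := hL.trans_le hLS
  rw [div_le_iff₀ hS, mul_comm _ S]
  exact hψ hL hS hLS

theorem neg_log_mul_le_of_monotoneOn (hψ : MonotoneOn (fun s => s * φ (exp (-s))) (Ioi 0))
    {x y u v : ℝ} (hx : 0 < x) (hy : 0 < y) (hu : 0 < u) (hu1 : u < 1)
    (huv : u ≤ v) (hφu : 0 < φ u) (hφ : x * φ v = y * φ u) :
    -log v * y ≤ -log u * x := by
  have hv := hu.trans_le huv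
  have hs : 0 < -log u := neg_pos.2 (log_neg hu hu1)
  rcases le_or_gt (-log v) 0 with hr | hr
  · nlinarith
  have hrs : -log v ≤ -log u := neg_le_neg (log_le_log hu huv)
  have hmono := hψ hr (hr.trans_le hrs) hrs
  simp only [neg_neg, exp_log hu, exp_log hv] at hmono
  have := mul_le_mul_of_nonneg_left hmono hx.le
  nlinarith

theorem rightInv_le_exp_neg_of_monotoneOn (hφ : StrictMonoOn φ (Ioi 0))
    (hinv : ∀ a > (0:ℝ), φ (φinv a) = a ∧ 0 < φinv a)
    (hψ : MonotoneOn (fun s => s * φ (exp (-s))) (Ioi 0)) {c₀ L t y : ℝ} (hc₀ : 0 < c₀)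
    (hL : 0 < L) (hy : c₀ ≤ y) (ht : 0 < t) (hT : 1 ≤ t * (c₀ * φ (exp (-L)))) :
    φinv (1 / (y * t)) ≤ exp (-(y * L / c₀)) := by
  have hy0 := hc₀.trans_le hy
  rw [hφ.rightInv_le_iff hinv (by positivity) (exp_pos _)]
  have hS : L ≤ y * L / c₀ := by
    rw [le_div_iff₀ hc₀]; nlinarith
  calc 1 / (y * t) ≤ c₀ * φ (exp (-L)) / y := by
        rw [div_le_div_iff₀ (by positivity) hy0]; nlinarith
    _ = L * φ (exp (-L)) / (y * L / c₀) := by field_simp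
    _ ≤ φ (exp (-(y * L / c₀))) := div_le_apply_exp_neg_of_monotoneOn hψ hL hS

theorem exp_mul_le_of_neg_log_mul_le {x c₀ L u v : ℝ} (hx : 0 < x) (hc₀ : 0 < c₀) (hu : 0 < u)
    (hv : 0 < v) (hlog : log u ≤ -((x + c₀) * L / c₀))
    (hratio : -log v * (x + c₀) ≤ -log u * x) :
    exp L * u ≤ v := by
  have hgap : L + log u ≤ log v := by
    have hsc : (x + c₀) * L ≤ -log u * c₀ := (div_le_iff₀ hc₀).1 (by linarith)
    refine le_of_mul_le_mul_left ?_ (by positivity : 0 < x + c₀)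
    linarith
  calc exp L * u = exp (L + log u) := by rw [exp_add, exp_log hu]
    _ ≤ v := by rw [← exp_log hv]; exact exp_le_exp.2 hgap

theorem exp_mul_rightInv_le_of_monotoneOn (hφ : StrictMonoOn φ (Ioi 0))
    (hinv : ∀ a > (0:ℝ), φ (φinv a) = a ∧ 0 < φinv a)
    (hψ : MonotoneOn (fun s => s * φ (exp (-s))) (Ioi 0)) {c₀ L t x : ℝ} (hc₀ : 0 < c₀)
    (hL : 0 < L) (hx : 0 < x) (ht : 0 < t) (hT : 1 ≤ t * (c₀ * φ (exp (-L)))) :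
    exp L * φinv (1 / ((x + c₀) * t)) ≤ φinv (1 / (x * t)) := by
  have hy : 0 < x + c₀ := by positivity
  set u := φinv (1 / ((x + c₀) * t))
  set v := φinv (1 / (x * t))
  obtain ⟨hφu, hu⟩ : φ u = 1 / ((x + c₀) * t) ∧ 0 < u := hinv _ (by positivity)
  obtain ⟨hφv, hv⟩ : φ v = 1 / (x * t) ∧ 0 < v := hinv _ (by positivity)
  have hu_le : u ≤ exp (-((x + c₀) * L / c₀)) :=
    rightInv_le_exp_neg_of_monotoneOn hφ hinv hψ hc₀ hL (by linarith) ht hT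
  have huv : u ≤ v := hφ.rightInv_le_rightInv hinv (by positivity)
    (one_div_le_one_div_of_le (by positivity) (by gcongr; linarith))
  refine exp_mul_le_of_neg_log_mul_le hx hc₀ hu hv ?_ ?_
  · rwa [← log_exp (-((x + c₀) * L / c₀)), log_le_log_iff hu (exp_pos _)]
  · exact neg_log_mul_le_of_monotoneOn hψ hx hy hu
      (hu_le.trans_lt (exp_lt_one_iff.2 (neg_neg_of_pos (by positivity)))) huv
      (by rw [hφu]; positivity) (by rw [hφu, hφv]; field_simp [hy.ne'])
end

theorem stmt_3_general
    (φ φinv : ℝ → ℝ)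
    (hφpos : ∀ x > (0:ℝ), 0 < φ x)
    (hφmono : StrictMonoOn φ (Ioi 0))
    (hφinv : ∀ x > (0:ℝ), φinv (φ x) = x ∧ φ (φinv x) = x ∧ 0 < φinv x)
    (hφnd : MonotoneOn (fun x => x * φ (Real.exp (-x))) (Ioi 0)) :
    ∀ c₀ > (0:ℝ), ∀ M > (0:ℝ), ∃ T > (0:ℝ), ∀ t ≥ T, ∀ x > (0:ℝ),
      M * φinv (1 / ((x + c₀) * t)) ≤ φinv (1 / (x * t)) := by
  intro c₀ hc₀ M hM
  set L := log (M + 1)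
  have hL : 0 < L := log_pos (by linarith)
  have hφL := hφpos _ (exp_pos (-L))
  refine ⟨1 / (c₀ * φ (exp (-L))), by positivity, fun t ht x hx => ?_⟩
  have ht0 : 0 < t := lt_of_lt_of_le (by positivity) ht
  have hML : M ≤ exp L := by rw [exp_log (by linarith)]; linarith
  calc M * φinv (1 / ((x + c₀) * t)) ≤ exp L * φinv (1 / ((x + c₀) * t)) :=
        mul_le_mul_of_nonneg_right hML (hφinv _ (by positivity)).2.2.le
    _ ≤ φinv (1 / (x * t)) :=
        exp_mul_rightInv_le_of_monotoneOn hφmono (fun a ha => (hφinv a ha).2) hφnd hc₀ hL hx ht0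
          ((div_le_iff₀ (by positivity)).1 ht)

/-- rapid divergence of the ratio `φ⁻¹(1/(xt)) / φ⁻¹(1/((x+c₀)t))`,
uniformly in `x > 0`. -/
theorem stmt_3
    (φ φinv : ℝ → ℝ)
    (hφpos : ∀ x > (0:ℝ), 0 < φ x)
    (hφmono : StrictMonoOn φ (Ioi 0))
    (hφsurj : φ '' (Ioi 0) = Ioi 0)
    (hφinv : ∀ x > (0:ℝ), φinv (φ x) = x ∧ φ (φinv x) = x ∧ 0 < φinv x)
    (hφnd : MonotoneOn (fun x => x * φ (Real.exp (-x))) (Ioi 0)) :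
    ∀ c₀ > (0:ℝ), ∀ M > (0:ℝ), ∃ T > (0:ℝ), ∀ t ≥ T, ∀ x > (0:ℝ),
      M * φinv (1 / ((x + c₀) * t)) ≤ φinv (1 / (x * t)) :=
  stmt_3_general φ φinv hφpos hφmono hφinv hφnd
end

section
/- Let ν be a Borel measure on (0,∞) with tail ν̄(u) := ν((u,∞)) finite for every u > 0, and let φ:(0,∞)→(0,∞) be a strictly increasing bijection of (0,∞) onto (0,∞) such that ν̄(u)/φ(1/u) → 1 as u → ∞. Then for every ε > 0, sup over x ≥ ε of |t·ν̄(1/φ^{-1}(1/(xt))) − 1/x| tends to 0 as t → ∞. -/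
open Real MeasureTheory Filter Set Topology

/-- uniform convergence of `t ν̄(1/φ⁻¹(1/(xt)))` to `1/x` on `x ≥ ε`. -/
theorem stmt_4
    (ν : Measure ℝ)
    (hν0 : ν (Iic 0) = 0)
    (hνfin : ∀ u > (0:ℝ), ν (Ioi u) < ⊤)
    (φ φinv : ℝ → ℝ)
    (hφpos : ∀ x > (0:ℝ), 0 < φ x)
    (hφmono : StrictMonoOn φ (Ioi 0))
    (hφsurj : φ '' (Ioi 0) = Ioi 0)
    (hφinv : ∀ x > (0:ℝ), φinv (φ x) = x ∧ φ (φinv x) = x ∧ 0 < φinv x)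
    (hequiv : Tendsto (fun u => (ν (Ioi u)).toReal / φ (1 / u)) atTop (𝓝 1)) :
    ∀ ε > (0:ℝ), ∀ η > (0:ℝ), ∃ T : ℝ, ∀ t ≥ T, ∀ x ≥ ε,
      |t * (ν (Ioi (1 / φinv (1 / (x * t))))).toReal - 1 / x| < η := by
  intro ε hε η hη
  have hεη : 0 < ε * η := mul_pos hε hη
  obtain ⟨U0, hU0⟩ := Metric.tendsto_atTop.mp hequiv (ε * η) hεη
  set U : ℝ := max U0 1 with hUdef
  have hUpos : (0:ℝ) < U := lt_of_lt_of_le one_pos (le_max_right _ _)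
  have hφU : 0 < φ (1 / U) := hφpos _ (by positivity)
  refine ⟨max 1 (1 / (ε * φ (1 / U))), fun t ht x hx => ?_⟩
  have ht1 : (1:ℝ) ≤ t := le_trans (le_max_left _ _) ht
  have htpos : 0 < t := lt_of_lt_of_le one_pos ht1
  have hxpos : 0 < x := lt_of_lt_of_le hε hx
  have hxt : 0 < x * t := mul_pos hxpos htpos
  have hy : 0 < 1 / (x * t) := by positivity
  obtain ⟨h1, h2, h3⟩ := hφinv (1 / (x * t)) hy
  -- 1/(x*t) ≤ φ (1/U)
  have hεt : 1 / (ε * φ (1 / U)) ≤ t := le_trans (le_max_right _ _) ht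
  rw [div_le_iff₀ (by positivity)] at hεt
  have hyle : 1 / (x * t) ≤ φ (1 / U) := by
    rw [div_le_iff₀ hxt]
    nlinarith [mul_le_mul_of_nonneg_right hx htpos.le]
  -- φinv (1/(x*t)) ≤ 1/U
  have hinvle : φinv (1 / (x * t)) ≤ 1 / U := by
    by_contra hc
    push_neg at hc
    have := hφmono (mem_Ioi.mpr (by positivity : (0:ℝ) < 1 / U)) (mem_Ioi.mpr h3) hc
    rw [h2] at this
    linarith
  set u : ℝ := 1 / φinv (1 / (x * t)) with hudef
  have hupos : 0 < u := by positivity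
  have huU : U ≤ u := by
    rw [hudef, le_div_iff₀ h3]
    calc U * φinv (1 / (x * t)) ≤ U * (1 / U) := by
          exact mul_le_mul_of_nonneg_left hinvle hUpos.le
      _ = 1 := by field_simp
  have hφu : φ (1 / u) = 1 / (x * t) := by
    rw [hudef, one_div_one_div]; exact h2
  have hkey := hU0 u (le_trans (le_max_left _ _) huU)
  rw [Real.dist_eq, hφu] at hkey
  set a : ℝ := (ν (Ioi u)).toReal with hadef
  have hkey' : |a * (x * t) - 1| < ε * η := by
    have : a / (1 / (x * t)) = a * (x * t) := by field_simp
    rwa [this] at hkey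
  have heq : t * a - 1 / x = (a * (x * t) - 1) / x := by
    field_simp
  rw [heq, abs_div, abs_of_pos hxpos, div_lt_iff₀ hxpos]
  nlinarith [abs_nonneg (a * (x * t) - 1)]
end

section
/- Let ν be a Lévy measure with tail ν̄ and Laplace exponent Φ(q) = βq + ∫₀^∞(1−e^{−qu})ν(du), β ≥ 0. If Φ is slowly varying at 0, then ν̄(u)/Φ(1/u) → 1 as u → ∞. -/
open Real MeasureTheory Filter Set Topology

/-!
Two elementary estimates compare the tail `ν̄` with `Φ`. Integrating
`(1 - e^{-qt}) 1_{u > t} ≤ 1 - e^{-qu}` gives `(1 - e^{-qt}) ν̄(t) ≤ Φ(q)`; splitting the integral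
at `u = δ/q` and bounding `1 - e^{-x}` below by its chord on `[0, 1]` gives
`Φ(q) ≤ ν̄(δ/q) + δ c Φ(q/δ)` with `c = (1 - e^{-1})⁻¹`. With `q = λ/u`, resp. `q = δ/u`, and
slow variation, `ν̄(u)/Φ(1/u)` is eventually below any `b > 1/(1 - e^{-λ})` and above any
`a < 1 - δ c`; let `λ → ∞` and `δ → 0`.
-/

theorem one_sub_exp_neg_nonneg {x : ℝ} (hx : 0 ≤ x) : 0 ≤ 1 - exp (-x) :=
  sub_nonneg.2 (exp_le_one_iff.2 (neg_nonpos.2 hx))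

theorem one_sub_exp_neg_le_one (x : ℝ) : 1 - exp (-x) ≤ 1 := by
  linarith [exp_pos (-x)]

theorem one_sub_exp_neg_le_self (x : ℝ) : 1 - exp (-x) ≤ x := by
  linarith [one_sub_le_exp_neg x]

theorem one_sub_exp_neg_one_pos : 0 < 1 - exp (-1) := by
  linarith [exp_neg_one_lt_half]

/-- The chord of the concave function `x ↦ 1 - exp (-x)` over `[0, 1]`. -/
theorem mul_le_one_sub_exp_neg {x : ℝ} (h0 : 0 ≤ x) (h1 : x ≤ 1) :
    (1 - exp (-1)) * x ≤ 1 - exp (-x) := by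
  have h := convexOn_exp.2 (mem_univ 0) (mem_univ (-1)) (sub_nonneg.2 h1) h0 (by ring)
  simp only [smul_eq_mul, mul_zero, mul_neg_one, zero_add, exp_zero] at h
  nlinarith

theorem one_sub_exp_neg_mul_le_max_mul_min {q u : ℝ} (hu : 0 ≤ u) :
    1 - exp (-q * u) ≤ max 1 q * min 1 u := by
  rw [neg_mul]
  rcases le_total u 1 with h | h
  · rw [min_eq_right h]
    calc 1 - exp (-(q * u)) ≤ q * u := one_sub_exp_neg_le_self _
      _ ≤ max 1 q * u := mul_le_mul_of_nonneg_right (le_max_right 1 q) hu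
  · rw [min_eq_left h, mul_one]
    exact (one_sub_exp_neg_le_one _).trans (le_max_left 1 q)

theorem one_sub_exp_neg_mul_le_indicator_add {q δ u : ℝ} (hq : 0 < q) (hδ : 0 < δ) (hu : 0 ≤ u) :
    1 - exp (-q * u) ≤
      (Ioi (δ / q)).indicator 1 u + δ * (1 - exp (-1))⁻¹ * (1 - exp (-(q / δ) * u)) := by
  have hexp_nonneg : 0 ≤ 1 - exp (-(q / δ) * u) := by
    rw [neg_mul]; exact one_sub_exp_neg_nonneg (by positivity)
  by_cases hut : u ∈ Ioi (δ / q)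
  · rw [indicator_of_mem hut, Pi.one_apply]
    have hc : 0 ≤ δ * (1 - exp (-1))⁻¹ :=
      mul_nonneg hδ.le (inv_pos.2 one_sub_exp_neg_one_pos).le
    rw [neg_mul]
    linarith [one_sub_exp_neg_le_one (q * u), mul_nonneg hc hexp_nonneg]
  · rw [indicator_of_notMem hut, zero_add, neg_mul, neg_mul]
    have hx : q / δ * u ≤ 1 := by
      rw [div_mul_eq_mul_div, div_le_one hδ, ← le_div_iff₀' hq]
      exact not_lt.1 hut
    have hchord : q / δ * u ≤ (1 - exp (-1))⁻¹ * (1 - exp (-(q / δ * u))) :=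
      (le_inv_mul_iff₀ one_sub_exp_neg_one_pos).2 (mul_le_one_sub_exp_neg (by positivity) hx)
    calc 1 - exp (-(q * u)) ≤ q * u := one_sub_exp_neg_le_self _
      _ = δ * (q / δ * u) := by field_simp
      _ ≤ δ * ((1 - exp (-1))⁻¹ * (1 - exp (-(q / δ * u)))) :=
          mul_le_mul_of_nonneg_left hchord hδ.le
      _ = _ := by ring

/-- A Lévy measure of a subordinator, as a measure on `ℝ` carried by `(0, ∞)`. -/
structure IsLevyMeasure (ν : Measure ℝ) : Prop where
  measure_Iic_zero : ν (Iic 0) = 0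
  lintegral_min_one_lt_top : ∫⁻ u, ENNReal.ofReal (min 1 u) ∂ν < ⊤

noncomputable def laplaceExponent (ν : Measure ℝ) (β q : ℝ) : ℝ :=
  β * q + ∫ u, (1 - exp (-q * u)) ∂ν

namespace IsLevyMeasure

variable {ν : Measure ℝ} {β : ℝ}

theorem ae_pos (hν : IsLevyMeasure ν) : ∀ᵐ u ∂ν, 0 < u := by
  exact (measure_eq_zero_iff_ae_notMem.1 hν.measure_Iic_zero).mono fun _ hu => not_le.1 hu

theorem measure_Ioi_lt_top (hν : IsLevyMeasure ν) {t : ℝ} (ht : 0 < t) : ν (Ioi t) < ⊤ := by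
  have hε : ENNReal.ofReal (min 1 t) ≠ 0 := (ENNReal.ofReal_pos.2 (lt_min one_pos ht)).ne'
  calc ν (Ioi t) ≤ ν {u | ENNReal.ofReal (min 1 t) ≤ ENNReal.ofReal (min 1 u)} :=
        measure_mono fun u hu => ENNReal.ofReal_le_ofReal (min_le_min_left 1 (le_of_lt hu))
    _ ≤ (∫⁻ u, ENNReal.ofReal (min 1 u) ∂ν) / ENNReal.ofReal (min 1 t) :=
        meas_ge_le_lintegral_div (by fun_prop) hε ENNReal.ofReal_ne_top
    _ < ⊤ := ENNReal.div_lt_top hν.lintegral_min_one_lt_top.ne hε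

theorem integrable_min_one (hν : IsLevyMeasure ν) : Integrable (fun u => min 1 u) ν := by
  have hnonneg : 0 ≤ᵐ[ν] fun u => min 1 u :=
    hν.ae_pos.mono fun u hu => le_min zero_le_one hu.le
  exact ⟨by fun_prop, (hasFiniteIntegral_iff_ofReal hnonneg).2 hν.lintegral_min_one_lt_top⟩

theorem integrable_one_sub_exp (hν : IsLevyMeasure ν) {q : ℝ} (hq : 0 ≤ q) :
    Integrable (fun u => 1 - exp (-q * u)) ν := by
  refine (hν.integrable_min_one.const_mul (max 1 q)).mono' (by fun_prop) ?_
  filter_upwards [hν.ae_pos] with u hu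
  rw [Real.norm_eq_abs, abs_of_nonneg (by rw [neg_mul]; exact one_sub_exp_neg_nonneg (by positivity))]
  exact one_sub_exp_neg_mul_le_max_mul_min hu.le

theorem laplaceExponent_mono (hν : IsLevyMeasure ν) (hβ : 0 ≤ β) {q q' : ℝ} (hq : 0 ≤ q)
    (hqq' : q ≤ q') : laplaceExponent ν β q ≤ laplaceExponent ν β q' := by
  have hint : ∫ u, (1 - exp (-q * u)) ∂ν ≤ ∫ u, (1 - exp (-q' * u)) ∂ν := by
    refine integral_mono_ae (hν.integrable_one_sub_exp hq)
      (hν.integrable_one_sub_exp (hq.trans hqq')) ?_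
    filter_upwards [hν.ae_pos] with u hu
    have : -q' * u ≤ -q * u := by nlinarith
    linarith [exp_le_exp.2 this]
  unfold laplaceExponent
  linarith [mul_le_mul_of_nonneg_left hqq' hβ]

theorem laplaceExponent_nonneg (hν : IsLevyMeasure ν) (hβ : 0 ≤ β) {q : ℝ} (hq : 0 ≤ q) :
    0 ≤ laplaceExponent ν β q := by
  simpa [laplaceExponent] using hν.laplaceExponent_mono hβ le_rfl hq

theorem one_sub_exp_mul_tail_le_laplaceExponent (hν : IsLevyMeasure ν) (hβ : 0 ≤ β) {q t : ℝ}
    (hq : 0 ≤ q) (ht : 0 < t) :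
    (1 - exp (-q * t)) * (ν (Ioi t)).toReal ≤ laplaceExponent ν β q := by
  have hpt : ∀ u, 0 < u → (Ioi t).indicator (fun _ => 1 - exp (-q * t)) u ≤ 1 - exp (-q * u) := by
    intro u hu
    by_cases hut : u ∈ Ioi t
    · rw [indicator_of_mem hut]
      have : -q * u ≤ -q * t := by nlinarith [mem_Ioi.1 hut]
      linarith [exp_le_exp.2 this]
    · rw [indicator_of_notMem hut, neg_mul]
      exact one_sub_exp_neg_nonneg (by positivity)
  have hint : (1 - exp (-q * t)) * (ν (Ioi t)).toReal ≤ ∫ u, (1 - exp (-q * u)) ∂ν := by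
    calc (1 - exp (-q * t)) * (ν (Ioi t)).toReal
        = ∫ u, (Ioi t).indicator (fun _ => 1 - exp (-q * t)) u ∂ν := by
          rw [integral_indicator_const _ measurableSet_Ioi, smul_eq_mul, measureReal_def, mul_comm]
      _ ≤ ∫ u, (1 - exp (-q * u)) ∂ν :=
          integral_mono_ae ((integrable_indicator_iff measurableSet_Ioi).2
            (integrableOn_const (hν.measure_Ioi_lt_top ht).ne))
            (hν.integrable_one_sub_exp hq) (hν.ae_pos.mono hpt)
  unfold laplaceExponent
  linarith [mul_nonneg hβ hq]

theorem laplaceExponent_le_tail_add (hν : IsLevyMeasure ν) (hβ : 0 ≤ β) {q δ : ℝ} (hq : 0 < q)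
    (hδ : 0 < δ) :
    laplaceExponent ν β q ≤
      (ν (Ioi (δ / q))).toReal + δ * (1 - exp (-1))⁻¹ * laplaceExponent ν β (q / δ) := by
  set c := (1 - exp (-1))⁻¹
  have hc : 1 ≤ c := (one_le_inv₀ one_sub_exp_neg_one_pos).2 (one_sub_exp_neg_le_one 1)
  have hqδ : 0 ≤ q / δ := by positivity
  have hind : Integrable ((Ioi (δ / q)).indicator (1 : ℝ → ℝ)) ν :=
    (integrable_indicator_iff measurableSet_Ioi).2
      (integrableOn_const (hν.measure_Ioi_lt_top (by positivity)).ne)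
  have hint : ∫ u, (1 - exp (-q * u)) ∂ν ≤
      (ν (Ioi (δ / q))).toReal + δ * c * ∫ u, (1 - exp (-(q / δ) * u)) ∂ν := by
    calc ∫ u, (1 - exp (-q * u)) ∂ν
        ≤ ∫ u, ((Ioi (δ / q)).indicator 1 u + δ * c * (1 - exp (-(q / δ) * u))) ∂ν :=
          integral_mono_ae (hν.integrable_one_sub_exp hq.le)
            (hind.add ((hν.integrable_one_sub_exp hqδ).const_mul _))
            (hν.ae_pos.mono fun u hu => one_sub_exp_neg_mul_le_indicator_add hq hδ hu.le)
      _ = _ := by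
          rw [integral_add hind ((hν.integrable_one_sub_exp hqδ).const_mul _),
            integral_indicator_one measurableSet_Ioi, integral_const_mul, measureReal_def]
  have hdrift : β * q ≤ δ * c * (β * (q / δ)) := by
    rw [show δ * c * (β * (q / δ)) = c * (β * q) by field_simp]
    exact le_mul_of_one_le_left (by positivity) hc
  unfold laplaceExponent
  linarith

end IsLevyMeasure

section SlowVariation

variable {T Φ : ℝ → ℝ}

theorem pos_of_tendsto_div_self (hmono : MonotoneOn Φ (Ioi 0)) (hnonneg : ∀ x > 0, 0 ≤ Φ x)
    (h : Tendsto (fun x => Φ x / Φ x) (𝓝[>] 0) (𝓝 1)) {q : ℝ} (hq : 0 < q) : 0 < Φ q := by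
  obtain ⟨x, hx, hxq⟩ :=
    ((h.eventually (eventually_ne_nhds one_ne_zero)).and (Ioo_mem_nhdsGT hq)).exists
  have hx0 : Φ x ≠ 0 := fun h0 => hx (by simp [h0])
  exact ((hnonneg x hxq.1).lt_of_ne' hx0).trans_le (hmono hxq.1 (hxq.1.trans hxq.2) hxq.2.le)

theorem tendsto_div_one_div_atTop
    (hSV : ∀ l > (0:ℝ), Tendsto (fun x => Φ (l * x) / Φ x) (𝓝[>] 0) (𝓝 1)) :
    ∀ l > (0:ℝ), Tendsto (fun u => Φ (l / u) / Φ (1 / u)) atTop (𝓝 1) := by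
  intro l hl
  refine ((hSV l hl).comp tendsto_inv_atTop_nhdsGT_zero).congr fun u => ?_
  simp only [Function.comp_apply, div_eq_mul_inv, one_mul]

theorem eventually_lt_div_of_le_add {C : ℝ}
    (hSV : ∀ l > (0:ℝ), Tendsto (fun u => Φ (l / u) / Φ (1 / u)) atTop (𝓝 1))
    (hpos : ∀ q > 0, 0 < Φ q) (hle : ∀ q > 0, ∀ δ > 0, Φ q ≤ T (δ / q) + δ * C * Φ (q / δ))
    {a : ℝ} (ha : a < 1) : ∀ᶠ u in atTop, a < T u / Φ (1 / u) := by
  have hC : Tendsto (fun δ => δ * C) (𝓝[>] 0) (𝓝 0) := by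
    simpa using (tendsto_nhdsWithin_of_tendsto_nhds (tendsto_id (x := 𝓝 (0:ℝ)))).mul_const C
  obtain ⟨δ, hδC, hδ⟩ :=
    ((hC.eventually (eventually_lt_nhds (by linarith : (0:ℝ) < (1 - a) / 2))).and
      self_mem_nhdsWithin).exists
  filter_upwards [(hSV δ hδ).eventually (eventually_gt_nhds (by linarith : 1 - (1 - a) / 2 < 1)),
    eventually_gt_atTop 0] with u hratio hu
  have hΦu := hpos (1 / u) (by positivity)
  have key : Φ (δ / u) ≤ T u + δ * C * Φ (1 / u) := by
    simpa only [div_div_cancel₀ hδ.ne', div_div_cancel_left' hδ.ne', one_div]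
      using hle (δ / u) (by positivity) δ hδ
  rw [lt_div_iff₀ hΦu] at hratio ⊢
  nlinarith [mul_lt_mul_of_pos_right hδC hΦu]

theorem eventually_div_lt_of_mul_le
    (hSV : ∀ l > (0:ℝ), Tendsto (fun u => Φ (l / u) / Φ (1 / u)) atTop (𝓝 1))
    (hpos : ∀ q > 0, 0 < Φ q) (hle : ∀ q > 0, ∀ t > 0, (1 - exp (-q * t)) * T t ≤ Φ q)
    {b : ℝ} (hb : 1 < b) : ∀ᶠ u in atTop, T u / Φ (1 / u) < b := by
  have hm : Tendsto (fun l => b * (1 - exp (-l))) atTop (𝓝 b) := by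
    simpa using (tendsto_exp_neg_atTop_nhds_zero.const_sub 1).const_mul b
  obtain ⟨l, hlb, hl⟩ := ((hm.eventually (eventually_gt_nhds hb)).and (eventually_gt_atTop 0)).exists
  have hm0 : 0 < 1 - exp (-l) := sub_pos.2 (exp_lt_one_iff.2 (neg_lt_zero.2 hl))
  filter_upwards [(hSV l hl).eventually (eventually_lt_nhds hlb), eventually_gt_atTop 0]
    with u hratio hu
  have hΦu := hpos (1 / u) (by positivity)
  have key : (1 - exp (-l)) * T u ≤ Φ (l / u) := by
    have := hle (l / u) (by positivity) u hu
    rwa [neg_mul, div_mul_cancel₀ l hu.ne'] at this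
  rw [div_lt_iff₀ hΦu] at hratio ⊢
  nlinarith

end SlowVariation

/-- if the Laplace exponent Φ is slowly varying at 0, then
`ν̄(u) ∼ Φ(1/u)` as `u → ∞`. -/
theorem stmt_5
    (ν : Measure ℝ) (β : ℝ) (hβ : 0 ≤ β)
    (hν0 : ν (Iic 0) = 0)
    (hνint : ∫⁻ u, ENNReal.ofReal (min 1 u) ∂ν < ⊤)
    (Φ : ℝ → ℝ)
    (hΦ : ∀ q, 0 ≤ q → Φ q = β * q + ∫ u, (1 - Real.exp (-q * u)) ∂ν)
    (hSV : ∀ l > (0:ℝ), Tendsto (fun x => Φ (l * x) / Φ x) (𝓝[>] 0) (𝓝 1)) :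
    Tendsto (fun u => (ν (Ioi u)).toReal / Φ (1 / u)) atTop (𝓝 1) := by
  have hν : IsLevyMeasure ν := ⟨hν0, hνint⟩
  have hmono : MonotoneOn Φ (Ioi 0) := fun x hx y hy hxy => by
    rw [hΦ x (le_of_lt hx), hΦ y (le_of_lt hy)]
    exact hν.laplaceExponent_mono hβ (le_of_lt hx) hxy
  have hnonneg : ∀ x > 0, 0 ≤ Φ x := fun x hx => by
    rw [hΦ x hx.le]
    exact hν.laplaceExponent_nonneg hβ hx.le
  have hpos : ∀ q > 0, 0 < Φ q := fun q hq =>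
    pos_of_tendsto_div_self hmono hnonneg (by simpa only [one_mul] using hSV 1 one_pos) hq
  have hSV' := tendsto_div_one_div_atTop hSV
  refine tendsto_order.2 ⟨fun a ha => ?_, fun b hb => ?_⟩
  · refine eventually_lt_div_of_le_add (C := (1 - exp (-1))⁻¹) hSV' hpos (fun q hq δ hδ => ?_) ha
    rw [hΦ q hq.le, hΦ (q / δ) (by positivity)]
    exact hν.laplaceExponent_le_tail_add hβ hq hδ
  · refine eventually_div_lt_of_mul_le hSV' hpos (fun q hq t ht => ?_) hb
    rw [hΦ q hq.le]
    exact hν.one_sub_exp_mul_tail_le_laplaceExponent hβ hq.le ht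
end

section
/- Let ν be a Lévy measure with Laplace exponent Φ(q) = βq + ∫₀^∞(1−e^{−qh})ν(dh), β ≥ 0. Then ∫₁^∞ ln(h) ν(dh) = ∞ if and only if ∫₀^θ Φ(x)/x dx = ∞ for some θ > 0 (equivalently, for every θ > 0). -/
open Real MeasureTheory Filter Set Topology
open scoped ENNReal

/-!
By Tonelli, `∫₀^θ Φ(x)/x dx = βθ + ∫ K_θ(u) ν(du)` with `K_θ(u) = ∫₀^θ (1 - e^{-xu})/x dx`.
Bounding the integrand by `u`, by `1/x`, and from below by `(1 - e⁻¹)/x` once `xu ≥ 1`, gives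
`K_θ(u) ≤ θu`, and `(1 - e⁻¹) log(θu) ≤ K_θ(u) ≤ 1 + log(θu)` for `θu ≥ 1`. So `K_θ` is comparable
to `min 1 u` near `0` and to `log u` near `∞`; as `ν` integrates `min 1 u` and gives finite mass
to `(1, ∞)`, `∫ K_θ dν` is infinite exactly when the log-moment is, whatever `θ > 0`.
-/

lemma one_sub_exp_neg_le_min (t : ℝ) : 1 - exp (-t) ≤ min 1 t :=
  le_min (by linarith [exp_pos (-t)]) (by linarith [add_one_le_exp (-t)])

lemma one_sub_exp_neg_mul_le (x : ℝ) {u : ℝ} (hu : 0 ≤ u) :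
    1 - exp (-x * u) ≤ max 1 x * min 1 u := by
  rw [neg_mul]
  refine (one_sub_exp_neg_le_min (x * u)).trans ?_
  rcases le_total u 1 with h | h
  · rw [min_eq_right h]
    exact (min_le_right _ _).trans (mul_le_mul_of_nonneg_right (le_max_right _ _) hu)
  · rw [min_eq_left h, mul_one]
    exact (min_le_left _ _).trans (le_max_left _ _)

lemma lintegral_ofReal_inv_Ioc {a b : ℝ} (ha : 0 < a) (hab : a ≤ b) :
    ∫⁻ x in Ioc a b, ENNReal.ofReal x⁻¹ = ENNReal.ofReal (log b - log a) := by
  have hint : IntegrableOn (fun x : ℝ => x⁻¹) (Ioc a b) :=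
    (continuousOn_inv₀.mono fun x hx => (ha.trans_le hx.1).ne').integrableOn_compact
      isCompact_Icc |>.mono_set Ioc_subset_Icc_self
  rw [← ofReal_integral_eq_lintegral_ofReal hint, ← intervalIntegral.integral_of_le hab,
    integral_inv_of_pos ha (ha.trans_le hab), log_div (ha.trans_le hab).ne' ha.ne']
  filter_upwards [ae_restrict_mem measurableSet_Ioc] with x hx
  exact inv_nonneg.2 (ha.trans hx.1).le

noncomputable def logKernel (θ u : ℝ) : ℝ≥0∞ :=
  ∫⁻ x in Ioc 0 θ, ENNReal.ofReal ((1 - exp (-x * u)) / x)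

lemma logKernel_mono {θ θ' : ℝ} (h : θ ≤ θ') (u : ℝ) : logKernel θ u ≤ logKernel θ' u :=
  lintegral_mono_set (Ioc_subset_Ioc_right h)

lemma logKernel_le_mul (θ u : ℝ) :
    logKernel θ u ≤ ENNReal.ofReal u * ENNReal.ofReal θ := by
  calc logKernel θ u ≤ ∫⁻ _ in Ioc 0 θ, ENNReal.ofReal u := by
        refine setLIntegral_mono' measurableSet_Ioc fun x hx => ENNReal.ofReal_le_ofReal ?_
        rw [div_le_iff₀ hx.1, neg_mul, mul_comm]
        exact (one_sub_exp_neg_le_min (u * x)).trans (min_le_right _ _)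
    _ = ENNReal.ofReal u * ENNReal.ofReal θ := by
        rw [setLIntegral_const, Real.volume_Ioc, sub_zero]

lemma logKernel_le_one_add_log {θ u : ℝ} (hu : 0 < u) (huθ : u⁻¹ ≤ θ) :
    logKernel θ u ≤ 1 + ENNReal.ofReal (log (θ * u)) := by
  have hu' : 0 < u⁻¹ := inv_pos.2 hu
  rw [logKernel, ← Ioc_union_Ioc_eq_Ioc hu'.le huθ]
  refine (lintegral_union_le _ _ _).trans (add_le_add ?_ ?_)
  · calc logKernel u⁻¹ u ≤ ENNReal.ofReal u * ENNReal.ofReal u⁻¹ := logKernel_le_mul _ _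
      _ = 1 := by rw [← ENNReal.ofReal_mul hu.le, mul_inv_cancel₀ hu.ne', ENNReal.ofReal_one]
  · calc _ ≤ ∫⁻ x in Ioc u⁻¹ θ, ENNReal.ofReal x⁻¹ := by
          refine setLIntegral_mono' measurableSet_Ioc fun x hx => ENNReal.ofReal_le_ofReal ?_
          rw [inv_eq_one_div]
          exact div_le_div_of_nonneg_right (by linarith [exp_pos (-x * u)]) (hu'.trans hx.1).le
      _ = ENNReal.ofReal (log (θ * u)) := by
          rw [lintegral_ofReal_inv_Ioc hu' huθ, log_inv, sub_neg_eq_add,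
            log_mul (hu'.trans_le huθ).ne' hu.ne']

lemma ofReal_mul_log_le_logKernel {θ u : ℝ} (hu : 0 < u) (huθ : u⁻¹ ≤ θ) :
    ENNReal.ofReal ((1 - exp (-1)) * log (θ * u)) ≤ logKernel θ u := by
  have hu' : 0 < u⁻¹ := inv_pos.2 hu
  have hc : 0 ≤ 1 - exp (-1) := by linarith [exp_neg_one_lt_half]
  calc ENNReal.ofReal ((1 - exp (-1)) * log (θ * u))
      = ∫⁻ x in Ioc u⁻¹ θ, ENNReal.ofReal (1 - exp (-1)) * ENNReal.ofReal x⁻¹ := by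
        rw [lintegral_const_mul' _ _ ENNReal.ofReal_ne_top, lintegral_ofReal_inv_Ioc hu' huθ,
          ← ENNReal.ofReal_mul hc, log_inv,
          sub_neg_eq_add, log_mul (hu'.trans_le huθ).ne' hu.ne']
    _ ≤ ∫⁻ x in Ioc u⁻¹ θ, ENNReal.ofReal ((1 - exp (-x * u)) / x) := by
        refine setLIntegral_mono' measurableSet_Ioc fun x hx => ?_
        have hx0 : 0 < x := hu'.trans hx.1
        rw [← ENNReal.ofReal_mul hc, ← div_eq_mul_inv]
        refine ENNReal.ofReal_le_ofReal (div_le_div_of_nonneg_right ?_ hx0.le)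
        have : 1 ≤ x * u := by
          rw [← inv_mul_cancel₀ hu.ne']; exact mul_le_mul_of_nonneg_right hx.1.le hu.le
        linarith [exp_le_exp.2 (show -x * u ≤ -1 by linarith)]
    _ ≤ logKernel θ u := lintegral_mono_set (Ioc_subset_Ioc_left hu'.le)

lemma measure_Ioi_lt_top_of_lintegral_min_lt_top {ν : Measure ℝ}
    (hν : ∫⁻ u, ENNReal.ofReal (min 1 u) ∂ν < ⊤) {ε : ℝ} (hε : 0 < ε) : ν (Ioi ε) < ⊤ := by
  have hc : ENNReal.ofReal (min 1 ε) ≠ 0 := by simp [hε]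
  calc ν (Ioi ε) ≤ ν {u | ENNReal.ofReal (min 1 ε) ≤ ENNReal.ofReal (min 1 u)} :=
        measure_mono fun u hu => ENNReal.ofReal_le_ofReal (min_le_min_left _ (le_of_lt hu))
    _ ≤ (∫⁻ u, ENNReal.ofReal (min 1 u) ∂ν) / ENNReal.ofReal (min 1 ε) :=
        meas_ge_le_lintegral_div (by fun_prop) hc ENNReal.ofReal_ne_top
    _ < ⊤ := ENNReal.div_lt_top hν.ne hc

lemma sigmaFinite_of_lintegral_min_lt_top {ν : Measure ℝ} (hν0 : ν (Iic 0) = 0)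
    (hν : ∫⁻ u, ENNReal.ofReal (min 1 u) ∂ν < ⊤) : SigmaFinite ν := by
  refine Measure.sigmaFinite_of_countable
    (S := insert (Iic 0) (range fun n : ℕ => Ioi (1 / (n + 1 : ℝ)))) ((countable_range _).insert _)
    ?_ ?_
  · rintro s (rfl | ⟨n, rfl⟩)
    · simp [hν0]
    · exact measure_Ioi_lt_top_of_lintegral_min_lt_top hν (by positivity)
  · refine eq_univ_of_forall fun x => ?_
    rcases le_or_gt x 0 with hx | hx
    · exact ⟨Iic 0, mem_insert _ _, hx⟩
    · obtain ⟨n, hn⟩ := exists_nat_one_div_lt hx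
      exact ⟨_, mem_insert_of_mem _ ⟨n, rfl⟩, hn⟩

lemma ae_pos_of_measure_Iic_zero {ν : Measure ℝ} (hν0 : ν (Iic 0) = 0) : ∀ᵐ u ∂ν, 0 < u := by
  rw [ae_iff]
  simp only [not_lt]
  exact hν0

lemma lintegral_logKernel_le {ν : Measure ℝ} (hν0 : ν (Iic 0) = 0) (θ : ℝ) :
    ∫⁻ u, logKernel θ u ∂ν ≤ ENNReal.ofReal θ * ∫⁻ u, ENNReal.ofReal (min 1 u) ∂ν
      + (1 + ENNReal.ofReal (log (max θ 1))) * ν (Ioi 1)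
      + ∫⁻ u in Ioi 1, ENNReal.ofReal (log u) ∂ν := by
  have hpt : ∀ u, 0 < u → logKernel θ u ≤ ENNReal.ofReal θ * ENNReal.ofReal (min 1 u)
      + (Ioi 1).indicator (fun u => 1 + ENNReal.ofReal (log (max θ 1))
        + ENNReal.ofReal (log u)) u := by
    intro u hu
    rcases le_or_gt u 1 with h | h
    · rw [min_eq_right h, mul_comm]
      exact (logKernel_le_mul θ u).trans le_self_add
    · rw [indicator_of_mem (mem_Ioi.2 h), add_assoc,
        ← ENNReal.ofReal_add (log_nonneg (le_max_right _ _)) (log_nonneg h.le),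
        ← log_mul (by positivity) hu.ne']
      refine (logKernel_mono (le_max_left θ 1) u).trans
        ((logKernel_le_one_add_log hu ?_).trans le_add_self)
      exact (inv_le_one_of_one_le₀ h.le).trans (le_max_right _ _)
  calc ∫⁻ u, logKernel θ u ∂ν ≤ ∫⁻ u, (ENNReal.ofReal θ * ENNReal.ofReal (min 1 u)
      + (Ioi 1).indicator (fun u => 1 + ENNReal.ofReal (log (max θ 1))
        + ENNReal.ofReal (log u)) u) ∂ν :=
        lintegral_mono_ae ((ae_pos_of_measure_Iic_zero hν0).mono hpt)
    _ = _ := by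
        rw [lintegral_add_left (by fun_prop), lintegral_const_mul' _ _ ENNReal.ofReal_ne_top,
          lintegral_indicator measurableSet_Ioi, lintegral_add_left measurable_const,
          setLIntegral_const, add_assoc]

lemma lintegral_log_le_lintegral_logKernel {ν : Measure ℝ} {θ : ℝ} (hθ : 0 < θ) :
    ENNReal.ofReal (1 - exp (-1)) * ∫⁻ u in Ioi 1, ENNReal.ofReal (log u) ∂ν
      ≤ ENNReal.ofReal |log θ| * ν (Ioi 1) + ∫⁻ u, logKernel θ u ∂ν := by
  have hc : 0 ≤ 1 - exp (-1) := by linarith [exp_neg_one_lt_half]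
  have hc1 : 1 - exp (-1) ≤ 1 := by linarith [exp_pos (-1)]
  have hpt : ∀ u ∈ Ioi (1 : ℝ), ENNReal.ofReal (1 - exp (-1)) * ENNReal.ofReal (log u)
      ≤ ENNReal.ofReal |log θ| + logKernel θ u := by
    intro u (hu : 1 < u)
    have hu0 : 0 < u := one_pos.trans hu
    have hlog : 0 ≤ log u := log_nonneg hu.le
    rw [← ENNReal.ofReal_mul hc]
    rcases le_or_gt u⁻¹ θ with huθ | huθ
    · calc ENNReal.ofReal ((1 - exp (-1)) * log u)
          ≤ ENNReal.ofReal (|log θ| + (1 - exp (-1)) * log (θ * u)) := by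
            refine ENNReal.ofReal_le_ofReal ?_
            rw [log_mul hθ.ne' hu0.ne']
            nlinarith [mul_le_mul_of_nonneg_left (neg_abs_le (log θ)) hc, abs_nonneg (log θ)]
        _ ≤ ENNReal.ofReal |log θ| + ENNReal.ofReal ((1 - exp (-1)) * log (θ * u)) :=
            ENNReal.ofReal_add_le
        _ ≤ ENNReal.ofReal |log θ| + logKernel θ u := by
            gcongr; exact ofReal_mul_log_le_logKernel hu0 huθ
    · refine le_add_right (ENNReal.ofReal_le_ofReal ?_)
      have : log u < -log θ := by
        rw [← log_inv]; exact log_lt_log hu0 ((lt_inv_comm₀ hθ hu0).1 huθ)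
      nlinarith [neg_le_abs (log θ)]
  calc _ = ∫⁻ u in Ioi 1, ENNReal.ofReal (1 - exp (-1)) * ENNReal.ofReal (log u) ∂ν :=
        (lintegral_const_mul' _ _ ENNReal.ofReal_ne_top).symm
    _ ≤ ∫⁻ u in Ioi 1, (ENNReal.ofReal |log θ| + logKernel θ u) ∂ν :=
        setLIntegral_mono' measurableSet_Ioi hpt
    _ ≤ ENNReal.ofReal |log θ| * ν (Ioi 1) + ∫⁻ u, logKernel θ u ∂ν := by
        rw [lintegral_add_left measurable_const, setLIntegral_const]
        gcongr
        exact Measure.restrict_le_self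

lemma lintegral_logKernel_eq_top_iff {ν : Measure ℝ} (hν0 : ν (Iic 0) = 0)
    (hν : ∫⁻ u, ENNReal.ofReal (min 1 u) ∂ν < ⊤) {θ : ℝ} (hθ : 0 < θ) :
    ∫⁻ u, logKernel θ u ∂ν = ⊤ ↔ ∫⁻ u in Ioi 1, ENNReal.ofReal (log u) ∂ν = ⊤ := by
  have hν1 : ν (Ioi 1) ≠ ⊤ := (measure_Ioi_lt_top_of_lintegral_min_lt_top hν one_pos).ne
  constructor
  · intro hK
    by_contra hL
    have hν_ne := hν.ne
    refine (lintegral_logKernel_le hν0 θ).not_gt (hK ▸ lt_top_iff_ne_top.2 ?_)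
    finiteness
  · intro hL
    have hc : ENNReal.ofReal (1 - exp (-1)) ≠ 0 := by simp
    have hlower := lintegral_log_le_lintegral_logKernel (ν := ν) hθ
    rw [hL, ENNReal.mul_top hc, top_le_iff, ENNReal.add_eq_top] at hlower
    exact hlower.resolve_left (ENNReal.mul_ne_top ENNReal.ofReal_ne_top hν1)

lemma lintegral_one_sub_exp_ne_top {ν : Measure ℝ} (hν0 : ν (Iic 0) = 0)
    (hν : ∫⁻ u, ENNReal.ofReal (min 1 u) ∂ν < ⊤) (x : ℝ) :
    ∫⁻ u, ENNReal.ofReal (1 - exp (-x * u)) ∂ν ≠ ⊤ := by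
  refine (lt_of_le_of_lt ?_ (ENNReal.mul_lt_top (ENNReal.ofReal_lt_top (r := max 1 x)) hν)).ne
  rw [← lintegral_const_mul' _ _ ENNReal.ofReal_ne_top]
  refine lintegral_mono_ae ((ae_pos_of_measure_Iic_zero hν0).mono fun u hu => ?_)
  rw [← ENNReal.ofReal_mul (zero_le_one.trans (le_max_left _ _))]
  exact ENNReal.ofReal_le_ofReal (one_sub_exp_neg_mul_le x hu.le)

lemma ofReal_div_eq_add_lintegral {ν : Measure ℝ} {β : ℝ} (hβ : 0 ≤ β) (hν0 : ν (Iic 0) = 0)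
    (hν : ∫⁻ u, ENNReal.ofReal (min 1 u) ∂ν < ⊤) {Φ : ℝ → ℝ}
    (hΦ : ∀ q, 0 ≤ q → Φ q = β * q + ∫ u, (1 - exp (-q * u)) ∂ν) {x : ℝ} (hx : 0 < x) :
    ENNReal.ofReal (Φ x / x)
      = ENNReal.ofReal β + ∫⁻ u, ENNReal.ofReal ((1 - exp (-x * u)) / x) ∂ν := by
  have hpos := ae_pos_of_measure_Iic_zero hν0
  have hfin := lintegral_one_sub_exp_ne_top hν0 hν x
  have hint : ∫ u, (1 - exp (-x * u)) ∂ν = (∫⁻ u, ENNReal.ofReal (1 - exp (-x * u)) ∂ν).toReal :=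
    integral_eq_lintegral_of_nonneg_ae (hpos.mono fun u hu => by
      simpa using exp_le_one_iff.2 (by nlinarith : -x * u ≤ 0)) (by fun_prop)
  have hΦx : Φ x / x = β + (∫⁻ u, ENNReal.ofReal (1 - exp (-x * u)) ∂ν).toReal / x := by
    rw [hΦ x hx.le, hint, add_div, mul_div_cancel_right₀ _ hx.ne']
  rw [hΦx, ENNReal.ofReal_add hβ (by positivity), ENNReal.ofReal_div_of_pos hx,
    ENNReal.ofReal_toReal hfin]
  simp_rw [ENNReal.ofReal_div_of_pos hx, div_eq_mul_inv]
  rw [lintegral_mul_const' _ _ (by simpa using hx)]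

lemma lintegral_laplaceExponent_div {ν : Measure ℝ} {β : ℝ} (hβ : 0 ≤ β) (hν0 : ν (Iic 0) = 0)
    (hν : ∫⁻ u, ENNReal.ofReal (min 1 u) ∂ν < ⊤) {Φ : ℝ → ℝ}
    (hΦ : ∀ q, 0 ≤ q → Φ q = β * q + ∫ u, (1 - exp (-q * u)) ∂ν) (θ : ℝ) :
    ∫⁻ x in Ioc 0 θ, ENNReal.ofReal (Φ x / x)
      = ENNReal.ofReal β * ENNReal.ofReal θ + ∫⁻ u, logKernel θ u ∂ν := by
  have := sigmaFinite_of_lintegral_min_lt_top hν0 hν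
  rw [setLIntegral_congr_fun measurableSet_Ioc fun x hx =>
      ofReal_div_eq_add_lintegral hβ hν0 hν hΦ hx.1,
    lintegral_add_left measurable_const, setLIntegral_const, Real.volume_Ioc, sub_zero,
    lintegral_lintegral_swap (by fun_prop)]
  rfl

/-- the log-moment of ν is infinite iff `∫₀^θ Φ(x)/x dx = ∞`
for some θ > 0 (equivalently, for every θ > 0). -/
theorem stmt_11
    (ν : Measure ℝ) (β : ℝ) (hβ : 0 ≤ β)
    (hν0 : ν (Iic 0) = 0)
    (hνint : ∫⁻ u, ENNReal.ofReal (min 1 u) ∂ν < ⊤)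
    (Φ : ℝ → ℝ)
    (hΦ : ∀ q, 0 ≤ q → Φ q = β * q + ∫ u, (1 - Real.exp (-q * u)) ∂ν) :
    ((∫⁻ h in Ioi (1:ℝ), ENNReal.ofReal (Real.log h) ∂ν = ⊤) ↔
      ∃ θ > (0:ℝ), ∫⁻ x in Ioc (0:ℝ) θ, ENNReal.ofReal (Φ x / x) = ⊤) ∧
    ((∫⁻ h in Ioi (1:ℝ), ENNReal.ofReal (Real.log h) ∂ν = ⊤) ↔
      ∀ θ > (0:ℝ), ∫⁻ x in Ioc (0:ℝ) θ, ENNReal.ofReal (Φ x / x) = ⊤) := by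
  have key : ∀ θ > (0:ℝ), ∫⁻ x in Ioc (0:ℝ) θ, ENNReal.ofReal (Φ x / x) = ⊤ ↔
      ∫⁻ h in Ioi (1:ℝ), ENNReal.ofReal (Real.log h) ∂ν = ⊤ := fun θ hθ => by
    rw [lintegral_laplaceExponent_div hβ hν0 hνint hΦ, ENNReal.add_eq_top,
      or_iff_right (ENNReal.mul_ne_top ENNReal.ofReal_ne_top ENNReal.ofReal_ne_top)]
    exact lintegral_logKernel_eq_top_iff hν0 hνint hθ
  exact ⟨⟨fun h => ⟨1, one_pos, (key 1 one_pos).2 h⟩, fun ⟨θ, hθ, h⟩ => (key θ hθ).1 h⟩,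
    ⟨fun h θ hθ => (key θ hθ).2 h, fun h => (key 1 one_pos).1 (h 1 one_pos)⟩⟩
end

section
/- Let ℓ:(0,∞)→(0,∞) be slowly varying at 0, let 0 < β ≤ α ≤ 1, d ≥ 0, d' > 0. Let Φ:(0,∞)→(0,∞) be a strictly increasing continuous bijection of (0,∞) onto (0,∞) with Φ(x)/(x^β·ℓ(x)) → d' as x → 0+, and let Ψ:(0,∞)→ℝ satisfy Ψ(x)/(x^{1+α}·ℓ(x)) → d as x → 0+. Set c(t) := Φ^{-1}(1/t) for t > 0. Then for every z > 0, as t → ∞: (i) t·Φ(z·c(t)) → z^β; and (ii) t·Ψ(z·c(t))/c(t) → (d/d')·z^{1+α} if β = α, while t·Ψ(z·c(t))/c(t) → 0 if β < α. -/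
open Real MeasureTheory Filter Set Topology

/-- deterministic limits behind the linear renormalisation of CBI
processes (Proposition 1.1). -/
theorem stmt_13
    (ℓ : ℝ → ℝ) (hℓpos : ∀ x > (0:ℝ), 0 < ℓ x)
    (hℓSV : ∀ l > (0:ℝ), Tendsto (fun x => ℓ (l * x) / ℓ x) (𝓝[>] 0) (𝓝 1))
    (α β d d' : ℝ) (hβ : 0 < β) (hβα : β ≤ α) (hα : α ≤ 1) (hd : 0 ≤ d) (hd' : 0 < d')
    (Φ Φinv : ℝ → ℝ)
    (hΦpos : ∀ x > (0:ℝ), 0 < Φ x)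
    (hΦmono : StrictMonoOn Φ (Ioi 0))
    (hΦcont : ContinuousOn Φ (Ioi 0))
    (hΦsurj : Φ '' (Ioi 0) = Ioi 0)
    (hΦinv : ∀ x > (0:ℝ), Φinv (Φ x) = x ∧ Φ (Φinv x) = x ∧ 0 < Φinv x)
    (hΦlim : Tendsto (fun x => Φ x / (x ^ β * ℓ x)) (𝓝[>] 0) (𝓝 d'))
    (Ψ : ℝ → ℝ)
    (hΨlim : Tendsto (fun x => Ψ x / (x ^ (1 + α) * ℓ x)) (𝓝[>] 0) (𝓝 d)) :
    ∀ z > (0:ℝ),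
      Tendsto (fun t => t * Φ (z * Φinv (1 / t))) atTop (𝓝 (z ^ β)) ∧
      (β = α → Tendsto (fun t => t * Ψ (z * Φinv (1 / t)) / Φinv (1 / t)) atTop
        (𝓝 ((d / d') * z ^ (1 + α)))) ∧
      (β < α → Tendsto (fun t => t * Ψ (z * Φinv (1 / t)) / Φinv (1 / t)) atTop
        (𝓝 0)) := by
  intro z hz
  have hcpos : ∀ t > (0:ℝ), 0 < Φinv (1 / t) := by
    intro t ht
    exact (hΦinv _ (by positivity)).2.2
  have hΦc : ∀ t > (0:ℝ), Φ (Φinv (1 / t)) = 1 / t := by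
    intro t ht
    exact (hΦinv _ (by positivity)).2.1
  -- c(t) → 0 within Ioi 0
  have hc0 : Tendsto (fun t => Φinv (1 / t)) atTop (𝓝[>] 0) := by
    rw [tendsto_nhdsWithin_iff]
    constructor
    · rw [tendsto_order]
      constructor
      · intro a ha
        filter_upwards [eventually_gt_atTop 0] with t ht
        exact ha.trans (hcpos t ht)
      · intro a ha
        have hΦa : 0 < Φ a := hΦpos a ha
        filter_upwards [eventually_gt_atTop (max 0 (1 / Φ a))] with t ht
        have ht0 : 0 < t := lt_of_le_of_lt (le_max_left _ _) ht
        have h1t : 1 / t < Φ a := by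
          have h2 := lt_of_le_of_lt (le_max_right 0 (1 / Φ a)) ht
          have h3 : 1 < t * Φ a := (div_lt_iff₀ hΦa).mp h2
          rw [div_lt_iff₀ ht0]
          linarith [h3, mul_comm t (Φ a)]
        by_contra hcon
        push_neg at hcon
        have := hΦmono.monotoneOn (mem_Ioi.2 ha) (mem_Ioi.2 (hcpos t ht0)) hcon
        rw [hΦc t ht0] at this
        linarith
    · filter_upwards [eventually_gt_atTop 0] with t ht using hcpos t ht
  have hmul : Tendsto (fun x : ℝ => z * x) (𝓝[>] (0:ℝ)) (𝓝[>] 0) := by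
    rw [tendsto_nhdsWithin_iff]
    constructor
    · have h1 : Tendsto (fun x : ℝ => z * x) (𝓝 0) (𝓝 (z * 0)) :=
        (continuous_const.mul continuous_id).tendsto 0
      simpa using h1.mono_left nhdsWithin_le_nhds
    · filter_upwards [self_mem_nhdsWithin] with x hx
      exact mul_pos hz hx
  have hgz : Tendsto (fun x => Φ (z * x) / ((z * x) ^ β * ℓ (z * x))) (𝓝[>] (0:ℝ)) (𝓝 d') :=
    hΦlim.comp hmul
  have hginv : Tendsto (fun x => (Φ x / (x ^ β * ℓ x))⁻¹) (𝓝[>] (0:ℝ)) (𝓝 d'⁻¹) :=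
    hΦlim.inv₀ hd'.ne'
  have hhz : Tendsto (fun x => Ψ (z * x) / ((z * x) ^ (1 + α) * ℓ (z * x))) (𝓝[>] (0:ℝ)) (𝓝 d) :=
    hΨlim.comp hmul
  -- part (i) base limit
  have hA : Tendsto (fun x => Φ (z * x) / Φ x) (𝓝[>] (0:ℝ)) (𝓝 (z ^ β)) := by
    have h1 := (hgz.mul (((hℓSV z hz).const_mul (z ^ β)))).mul hginv
    have heq : d' * (z ^ β * 1) * d'⁻¹ = z ^ β := by field_simp
    rw [heq] at h1
    refine h1.congr' ?_
    filter_upwards [self_mem_nhdsWithin] with x hx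
    have hx0 : (0:ℝ) < x := hx
    have hzx : 0 < z * x := mul_pos hz hx0
    have hmr : (z * x) ^ β = z ^ β * x ^ β := Real.mul_rpow hz.le hx0.le
    have hℓx := (hℓpos x hx0).ne'
    have hℓzx := (hℓpos _ hzx).ne'
    have hΦx := (hΦpos x hx0).ne'
    have hxβ : (0:ℝ) < x ^ β := Real.rpow_pos_of_pos hx0 β
    have hzβ : (0:ℝ) < z ^ β := Real.rpow_pos_of_pos hz β
    rw [hmr]
    field_simp
  have part1 : Tendsto (fun t => t * Φ (z * Φinv (1 / t))) atTop (𝓝 (z ^ β)) := by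
    refine (hA.comp hc0).congr' ?_
    filter_upwards [eventually_gt_atTop 0] with t ht
    simp only [Function.comp]
    rw [hΦc t ht, div_div_eq_mul_div, div_one, mul_comm]
  -- key lemma for part (ii)
  have key : ∀ L : ℝ, Tendsto (fun x : ℝ => x ^ (α - β)) (𝓝[>] (0:ℝ)) (𝓝 L) →
      Tendsto (fun x => Ψ (z * x) / (x * Φ x)) (𝓝[>] (0:ℝ))
        (𝓝 (d * z ^ (1 + α) * L * (1 * d'⁻¹))) := by
    intro L hL
    have h1 := ((hhz.mul_const (z ^ (1 + α))).mul hL).mul ((hℓSV z hz).mul hginv)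
    refine h1.congr' ?_
    filter_upwards [self_mem_nhdsWithin] with x hx
    have hx0 : (0:ℝ) < x := hx
    have hzx : 0 < z * x := mul_pos hz hx0
    have hmr : (z * x) ^ (1 + α) = z ^ (1 + α) * x ^ (1 + α) := Real.mul_rpow hz.le hx0.le
    have hx1α : x ^ (1 + α) = x * x ^ α := by
      rw [Real.rpow_add hx0, Real.rpow_one]
    have hxab : x ^ (α - β) = x ^ α / x ^ β := Real.rpow_sub hx0 α β
    have hℓx := (hℓpos x hx0).ne'
    have hℓzx := (hℓpos _ hzx).ne'
    have hΦx := (hΦpos x hx0).ne'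
    have hxβ : (0:ℝ) < x ^ β := Real.rpow_pos_of_pos hx0 β
    have hxα : (0:ℝ) < x ^ α := Real.rpow_pos_of_pos hx0 α
    have hz1α : (0:ℝ) < z ^ (1 + α) := Real.rpow_pos_of_pos hz (1 + α)
    rw [hmr, hx1α, hxab]
    field_simp
  -- translate x-limit to t-limit
  have trans : ∀ M : ℝ, Tendsto (fun x => Ψ (z * x) / (x * Φ x)) (𝓝[>] (0:ℝ)) (𝓝 M) →
      Tendsto (fun t => t * Ψ (z * Φinv (1 / t)) / Φinv (1 / t)) atTop (𝓝 M) := by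
    intro M hM
    refine (hM.comp hc0).congr' ?_
    filter_upwards [eventually_gt_atTop 0] with t ht
    simp only [Function.comp]
    rw [hΦc t ht]
    have hc := hcpos t ht
    field_simp
  refine ⟨part1, ?_, ?_⟩
  · intro hβαeq
    have hL : Tendsto (fun x : ℝ => x ^ (α - β)) (𝓝[>] (0:ℝ)) (𝓝 1) := by
      have : α - β = 0 := by linarith
      simp [this]
    have := trans _ (key 1 hL)
    have heq : d * z ^ (1 + α) * 1 * (1 * d'⁻¹) = d / d' * z ^ (1 + α) := by
      field_simp
    rwa [heq] at this
  · intro hβαlt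
    have hL : Tendsto (fun x : ℝ => x ^ (α - β)) (𝓝[>] (0:ℝ)) (𝓝 0) := by
      have hpos : 0 < α - β := by linarith
      have hcont := Real.continuousAt_rpow_const 0 (α - β) (Or.inr hpos.le)
      have h1 : Tendsto (fun x : ℝ => x ^ (α - β)) (𝓝 0) (𝓝 ((0:ℝ) ^ (α - β))) :=
        hcont.tendsto
      rw [Real.zero_rpow hpos.ne'] at h1
      exact h1.mono_left nhdsWithin_le_nhds
    have := trans _ (key 0 hL)
    have heq : d * z ^ (1 + α) * 0 * (1 * d'⁻¹) = 0 := by ring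
    rwa [heq] at this
end

section
/- Let Φ:(0,∞)→(0,∞) be a strictly increasing continuous bijection of (0,∞) onto (0,∞) that is slowly varying at 0. Then for every n ≥ 1 and all θ₁,…,θ_n > 0 and x₁,…,x_n > 0, t·Φ( Σ_{j=1}^n θ_j·Φ^{-1}(x_j/t) ) → max{x₁,…,x_n} as t → ∞. -/
open Real MeasureTheory Filter Set Topology

/-- for Φ slowly varying at 0,
`t Φ(Σ θ_j Φ⁻¹(x_j/t)) → max_j x_j` as `t → ∞`. -/
theorem stmt_16
    (Φ Φinv : ℝ → ℝ)
    (hΦpos : ∀ x > (0:ℝ), 0 < Φ x)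
    (hΦmono : StrictMonoOn Φ (Ioi 0))
    (hΦcont : ContinuousOn Φ (Ioi 0))
    (hΦsurj : Φ '' (Ioi 0) = Ioi 0)
    (hΦinv : ∀ x > (0:ℝ), Φinv (Φ x) = x ∧ Φ (Φinv x) = x ∧ 0 < Φinv x)
    (hSV : ∀ l > (0:ℝ), Tendsto (fun x => Φ (l * x) / Φ x) (𝓝[>] 0) (𝓝 1))
    (n : ℕ) (hn : 0 < n)
    (θ x : Fin n → ℝ) (hθ : ∀ j, 0 < θ j) (hx : ∀ j, 0 < x j) :
    Tendsto (fun t => t * Φ (∑ j, θ j * Φinv (x j / t))) atTop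
      (𝓝 (Finset.univ.sup' ⟨⟨0, hn⟩, Finset.mem_univ _⟩ x)) := by
  obtain ⟨j, -, hj⟩ := Finset.exists_mem_eq_sup' (⟨⟨0, hn⟩, Finset.mem_univ _⟩ :
    (Finset.univ : Finset (Fin n)).Nonempty) x
  set M := Finset.univ.sup' ⟨⟨0, hn⟩, Finset.mem_univ _⟩ x with hMdef
  have hMpos : 0 < M := hj ▸ hx j
  have hxM : ∀ i, x i ≤ M := fun i => Finset.le_sup' x (Finset.mem_univ i)
  set c := θ j with hcdef
  set C := ∑ i, θ i with hCdef
  have hc : 0 < c := hθ j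
  have hC : 0 < C := Finset.sum_pos (fun i _ => hθ i) ⟨⟨0, hn⟩, Finset.mem_univ _⟩
  have hcC : c ≤ C := Finset.single_le_sum (fun i _ => (hθ i).le) (Finset.mem_univ j)
  -- monotonicity of Φinv
  have hinv_mono : ∀ a b : ℝ, 0 < a → a ≤ b → Φinv a ≤ Φinv b := by
    intro a b ha hab
    by_contra h
    push_neg at h
    have h1 := hΦinv a ha
    have h2 := hΦinv b (ha.trans_le hab)
    have := hΦmono h2.2.2 h1.2.2 h
    rw [h1.2.1, h2.2.1] at this
    exact absurd hab (not_le.2 this)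
  set u := fun t : ℝ => Φinv (M / t) with hu
  have hu_pos : ∀ t > (0:ℝ), 0 < u t := fun t ht => (hΦinv _ (div_pos hMpos ht)).2.2
  have hΦu : ∀ t > (0:ℝ), Φ (u t) = M / t := fun t ht => (hΦinv _ (div_pos hMpos ht)).2.1
  -- u tends to 0 from the right
  have hu0 : Tendsto u atTop (𝓝[>] 0) := by
    rw [tendsto_nhdsWithin_iff]
    constructor
    · rw [tendsto_order]
      constructor
      · intro a ha
        filter_upwards [eventually_gt_atTop 0] with t ht
        exact ha.trans (hu_pos t ht)
      · intro a ha
        filter_upwards [eventually_gt_atTop (max 0 (M / Φ a))] with t ht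
        have ht0 : 0 < t := (le_max_left _ _).trans_lt ht
        have hΦa : 0 < Φ a := hΦpos a ha
        have hMt : M / t < Φ a := by
          rw [div_lt_iff₀ ht0]
          have h1 : M / Φ a < t := (le_max_right _ _).trans_lt ht
          calc M = Φ a * (M / Φ a) := by field_simp
            _ < Φ a * t := mul_lt_mul_of_pos_left h1 hΦa
        by_contra h
        push_neg at h
        have h1 := hΦinv (M / t) (div_pos hMpos ht0)
        have h2 : Φ a ≤ Φ (u t) :=
          hΦmono.monotoneOn ha (mem_Ioi.2 h1.2.2) h
        rw [hΦu t ht0] at h2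
        exact absurd hMt (not_lt.2 h2)
    · filter_upwards [eventually_gt_atTop 0] with t ht using hu_pos t ht
  -- bounds on the sum
  set S := fun t : ℝ => ∑ i, θ i * Φinv (x i / t) with hS
  have hterm_pos : ∀ (t : ℝ), 0 < t → ∀ i : Fin n, 0 < θ i * Φinv (x i / t) :=
    fun t ht i => mul_pos (hθ i) (hΦinv _ (div_pos (hx i) ht)).2.2
  have hS_ub : ∀ t > (0:ℝ), S t ≤ C * u t := by
    intro t ht
    calc S t ≤ ∑ i, θ i * u t := by
          refine Finset.sum_le_sum fun i _ => ?_
          have hle : x i / t ≤ M / t := by gcongr; exact hxM i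
          exact mul_le_mul_of_nonneg_left
            (hinv_mono _ _ (div_pos (hx i) ht) hle) (hθ i).le
      _ = C * u t := by rw [← Finset.sum_mul]
  have hS_lb : ∀ t > (0:ℝ), c * u t ≤ S t := by
    intro t ht
    have : c * u t = θ j * Φinv (x j / t) := by rw [hu, ← hj]
    rw [this]
    exact Finset.single_le_sum (fun i _ => (hterm_pos t ht i).le) (Finset.mem_univ j)
  have hS_pos : ∀ t > (0:ℝ), 0 < S t :=
    fun t ht => lt_of_lt_of_le (mul_pos hc (hu_pos t ht)) (hS_lb t ht)
  -- the two bounding functions tend to M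
  have hbound : ∀ l : ℝ, 0 < l →
      Tendsto (fun t => t * Φ (l * u t)) atTop (𝓝 M) := by
    intro l hl
    have h1 : Tendsto (fun t => M * (Φ (l * u t) / Φ (u t))) atTop (𝓝 (M * 1)) :=
      Tendsto.const_mul M ((hSV l hl).comp hu0)
    rw [mul_one] at h1
    refine h1.congr' ?_
    filter_upwards [eventually_gt_atTop 0] with t ht
    have hΦut : Φ (u t) = M / t := hΦu t ht
    have hΦutpos : 0 < Φ (u t) := hΦut ▸ div_pos hMpos ht
    rw [hΦut]
    field_simp
  -- squeeze
  refine tendsto_of_tendsto_of_tendsto_of_le_of_le' (hbound c hc) (hbound C hC) ?_ ?_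
  · filter_upwards [eventually_gt_atTop 0] with t ht
    refine mul_le_mul_of_nonneg_left ?_ ht.le
    exact hΦmono.monotoneOn (mem_Ioi.2 (mul_pos hc (hu_pos t ht)))
      (mem_Ioi.2 (hS_pos t ht)) (hS_lb t ht)
  · filter_upwards [eventually_gt_atTop 0] with t ht
    refine mul_le_mul_of_nonneg_left ?_ ht.le
    exact hΦmono.monotoneOn (mem_Ioi.2 (hS_pos t ht))
      (mem_Ioi.2 (mul_pos hC (hu_pos t ht))) (hS_ub t ht)
end

section
/- Let Φ:[0,∞)→[0,∞) be a continuous strictly increasing bijection of [0,∞) onto [0,∞) whose restriction to (0,∞) is slowly varying at 0. Let (Y_t)_{t≥0} be a subordinator with Laplace exponent Φ on some probability space. Then for every n ≥ 1, all times 0 = s₀ < s₁ < … < s_n, and all θ₁,…,θ_n > 0, x₁,…,x_n > 0: lim_{t→∞} E[ exp( −Σ_{j=1}^n θ_j·Φ^{-1}(x_j/t)·Y_{s_j·t} ) ] = exp( −Σ_{i=1}^n (s_i − s_{i−1})·max{x_i, x_{i+1}, …, x_n} ). -/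
/-!
Summation by parts rewrites `∑ⱼ θⱼ Φ⁻¹(xⱼ/t) Y_{sⱼ t}` as `∑ᵢ Lᵢ(t) (Y_{sᵢ t} - Y_{sᵢ₋₁ t})` with
`Lᵢ(t) = ∑_{j ≥ i} θⱼ Φ⁻¹(xⱼ/t)`, so independence of the increments makes the Laplace transform
exactly `exp (-∑ᵢ (sᵢ - sᵢ₋₁) · t Φ(Lᵢ(t)))`. If `Mᵢ = max_{j ≥ i} xⱼ`, monotonicity of `Φ⁻¹`
squeezes `Lᵢ(t)` between two constant multiples of `u = Φ⁻¹(Mᵢ/t)`, and for every `c > 0`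
slow variation gives `t Φ(c u) = Mᵢ Φ(c u) / Φ(u) → Mᵢ`, because `u → 0⁺`.
-/

open Real MeasureTheory Filter Set Topology ProbabilityTheory

theorem Fin.sum_mul_succ_eq_sum_sum_Ici_mul_sub {R : Type*} [Ring R] {n : ℕ} (a : Fin n → R)
    (f : Fin (n + 1) → R) (hf : f 0 = 0) :
    ∑ j, a j * f j.succ =
      ∑ i, (∑ j ∈ Finset.univ.filter (i ≤ ·), a j) * (f i.succ - f i.castSucc) := by
  simp_rw [Finset.sum_mul]
  rw [Finset.sum_comm' (t' := Finset.univ) (s' := fun j => Finset.Iic j)]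
  · refine Finset.sum_congr rfl fun j _ => ?_
    rw [← Finset.mul_sum, Fin.sum_Iic_sub, hf, sub_zero]
  · simp

theorem MonotoneOn.of_rightInvOn {α β : Type*} [LinearOrder α] [PartialOrder β] {Φ : α → β}
    {Φinv : β → α} {s : Set α} {t : Set β} (hΦ : MonotoneOn Φ s) (hmaps : MapsTo Φinv t s)
    (hinv : RightInvOn Φinv Φ t) : MonotoneOn Φinv t := by
  intro u hu v hv huv
  by_contra! hlt
  have hvu : v ≤ u := by
    simpa only [hinv hu, hinv hv] using hΦ (hmaps hv) (hmaps hu) hlt.le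
  exact hlt.ne (by rw [le_antisymm huv hvu])

section SlowVariation

variable {Φ Φinv : ℝ → ℝ}

theorem tendsto_nhdsGT_zero_of_rightInvOn (hΦ0 : Φ 0 = 0) (hΦ : StrictMonoOn Φ (Ici 0))
    (hmaps : MapsTo Φinv (Ici 0) (Ici 0)) (hinv : RightInvOn Φinv Φ (Ici 0)) :
    Tendsto Φinv (𝓝[>] 0) (𝓝[>] 0) := by
  refine tendsto_nhdsWithin_iff.2 ⟨tendsto_order.2 ⟨fun b hb => ?_, fun b hb => ?_⟩, ?_⟩
  · filter_upwards [self_mem_nhdsWithin] with y (hy : 0 < y)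
    exact hb.trans_le (hmaps hy.le)
  · have hΦb : 0 < Φ b := hΦ0 ▸ hΦ self_mem_Ici hb.le hb
    filter_upwards [nhdsWithin_le_nhds (Iio_mem_nhds hΦb), self_mem_nhdsWithin]
      with y (hyb : y < Φ b) (hy : 0 < y)
    by_contra! hby
    exact (hinv hy.le ▸ hΦ.monotoneOn hb.le (hmaps hy.le) hby).not_gt hyb
  · filter_upwards [self_mem_nhdsWithin] with y (hy : 0 < y)
    refine lt_of_le_of_ne (mem_Ici.1 (hmaps hy.le)) fun h => hy.ne ?_
    rw [← hinv hy.le, ← h, hΦ0]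

theorem tendsto_mul_apply_const_mul_apply_div (hΦ0 : Φ 0 = 0) (hΦ : StrictMonoOn Φ (Ici 0))
    (hmaps : MapsTo Φinv (Ici 0) (Ici 0)) (hinv : RightInvOn Φinv Φ (Ici 0)) {c a : ℝ}
    (hSV : Tendsto (fun x => Φ (c * x) / Φ x) (𝓝[>] 0) (𝓝 1)) (ha : 0 < a) :
    Tendsto (fun t => t * Φ (c * Φinv (a / t))) atTop (𝓝 a) := by
  have hdiv : Tendsto (fun t : ℝ => a / t) atTop (𝓝[>] 0) :=
    tendsto_nhdsWithin_iff.2 ⟨tendsto_const_nhds.div_atTop tendsto_id,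
      (eventually_gt_atTop 0).mono fun t ht => div_pos ha ht⟩
  have hratio := ((hSV.comp ((tendsto_nhdsGT_zero_of_rightInvOn hΦ0 hΦ hmaps hinv).comp
    hdiv)).const_mul a)
  rw [mul_one] at hratio
  refine hratio.congr' ?_
  filter_upwards [eventually_gt_atTop 0] with t ht
  simp only [Function.comp_apply, hinv (div_pos ha ht).le]
  field_simp

theorem tendsto_mul_apply_sum_mul_apply_div {ι : Type*} (hΦ0 : Φ 0 = 0)
    (hΦ : StrictMonoOn Φ (Ici 0)) (hmaps : MapsTo Φinv (Ici 0) (Ici 0))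
    (hinv : RightInvOn Φinv Φ (Ici 0))
    (hSV : ∀ l > 0, Tendsto (fun x => Φ (l * x) / Φ x) (𝓝[>] 0) (𝓝 1))
    {S : Finset ι} (hS : S.Nonempty) {θ x : ι → ℝ} (hθ : ∀ j ∈ S, 0 < θ j)
    (hx : ∀ j ∈ S, 0 < x j) :
    Tendsto (fun t => t * Φ (∑ j ∈ S, θ j * Φinv (x j / t))) atTop (𝓝 (S.sup' hS x)) := by
  obtain ⟨j₀, hj₀, hmax⟩ := S.exists_mem_eq_sup' hS x
  rw [hmax]
  have hlower := tendsto_mul_apply_const_mul_apply_div hΦ0 hΦ hmaps hinv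
    (hSV _ (hθ j₀ hj₀)) (hx j₀ hj₀)
  have hupper := tendsto_mul_apply_const_mul_apply_div hΦ0 hΦ hmaps hinv
    (hSV _ (Finset.sum_pos hθ hS)) (hx j₀ hj₀)
  have hΦinv_mono := hΦ.monotoneOn.of_rightInvOn hmaps hinv
  have hΦinv_nonneg (t : ℝ) (ht : 0 < t) {j : ι} (hj : j ∈ S) : 0 ≤ Φinv (x j / t) :=
    hmaps (div_pos (hx j hj) ht).le
  have hsum_nonneg (t : ℝ) (ht : 0 < t) : 0 ≤ ∑ j ∈ S, θ j * Φinv (x j / t) :=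
    Finset.sum_nonneg fun j hj => mul_nonneg (hθ j hj).le (hΦinv_nonneg t ht hj)
  refine tendsto_of_tendsto_of_tendsto_of_le_of_le' hlower hupper ?_ ?_ <;>
    filter_upwards [eventually_gt_atTop 0] with t ht <;>
    refine mul_le_mul_of_nonneg_left (hΦ.monotoneOn ?_ ?_ ?_) ht.le
  · exact mul_nonneg (hθ j₀ hj₀).le (hΦinv_nonneg t ht hj₀)
  · exact hsum_nonneg t ht
  · exact Finset.single_le_sum (f := fun j => θ j * Φinv (x j / t))
      (fun j hj => mul_nonneg (hθ j hj).le (hΦinv_nonneg t ht hj)) hj₀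
  · exact hsum_nonneg t ht
  · exact mul_nonneg (Finset.sum_pos hθ hS).le (hΦinv_nonneg t ht hj₀)
  · rw [Finset.sum_mul]
    refine Finset.sum_le_sum fun j hj => mul_le_mul_of_nonneg_left ?_ (hθ j hj).le
    refine hΦinv_mono (div_pos (hx j hj) ht).le (div_pos (hx j₀ hj₀) ht).le ?_
    exact div_le_div_of_nonneg_right (hmax ▸ S.le_sup' x hj) ht.le

end SlowVariation

theorem integral_exp_neg_sum_mul_eq {Ω : Type*} [MeasurableSpace Ω] (P : Measure Ω)
    (Y : ℝ → Ω → ℝ) (hYmeas : ∀ t, Measurable (Y t)) (hY0 : ∀ᵐ ω ∂P, Y 0 ω = 0)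
    (hYindep : ∀ (m : ℕ) (τ : Fin (m + 1) → ℝ), (∀ i, 0 ≤ τ i) → Monotone τ →
      iIndepFun (m := fun _ : Fin m => Real.measurableSpace)
        (fun i ω => Y (τ i.succ) ω - Y (τ i.castSucc) ω) P)
    (Φ : ℝ → ℝ)
    (hLaplace : ∀ s t l : ℝ, 0 ≤ s → s ≤ t → 0 ≤ l →
      ∫ ω, Real.exp (-(l * (Y t ω - Y s ω))) ∂P = Real.exp (-((t - s) * Φ l)))
    {n : ℕ} (τ : Fin (n + 1) → ℝ) (hτ0 : τ 0 = 0) (hτ : Monotone τ)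
    (a : Fin n → ℝ) (ha : ∀ j, 0 ≤ a j) :
    ∫ ω, Real.exp (-∑ j, a j * Y (τ j.succ) ω) ∂P =
      Real.exp (-∑ i, (τ i.succ - τ i.castSucc) * Φ (∑ j ∈ Finset.univ.filter (i ≤ ·), a j)) := by
  set L : Fin n → ℝ := fun i => ∑ j ∈ Finset.univ.filter (i ≤ ·), a j
  have hτ_nonneg (i : Fin (n + 1)) : 0 ≤ τ i := hτ0 ▸ hτ (Fin.zero_le i)
  have hincr := hYindep n τ hτ_nonneg hτ
  calc ∫ ω, Real.exp (-∑ j, a j * Y (τ j.succ) ω) ∂P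
      = ∫ ω, ∏ i, Real.exp (-(L i * (Y (τ i.succ) ω - Y (τ i.castSucc) ω))) ∂P := by
        refine integral_congr_ae ?_
        filter_upwards [hY0] with ω hω
        rw [Fin.sum_mul_succ_eq_sum_sum_Ici_mul_sub a (fun i => Y (τ i) ω) (by rw [hτ0, hω]),
          ← Finset.sum_neg_distrib, Real.exp_sum]
    _ = ∏ i, ∫ ω, Real.exp (-(L i * (Y (τ i.succ) ω - Y (τ i.castSucc) ω))) ∂P :=
        hincr.integral_fun_prod_comp (f := fun i v => Real.exp (-(L i * v)))
          (fun i => ((hYmeas _).sub (hYmeas _)).aemeasurable)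
          (fun i => by fun_prop)
    _ = Real.exp (-∑ i, (τ i.succ - τ i.castSucc) * Φ (L i)) := by
        rw [← Finset.sum_neg_distrib, Real.exp_sum]
        exact Finset.prod_congr rfl fun i _ => hLaplace _ _ _ (hτ_nonneg _)
          (hτ (Fin.castSucc_le_succ i)) (Finset.sum_nonneg fun j _ => ha j)

/-- convergence of the joint Laplace transforms of the
renormalised subordinator towards those of an extremal process. -/
theorem stmt_17
    {Ω : Type*} [MeasurableSpace Ω] (P : Measure Ω)
    (Y : ℝ → Ω → ℝ)
    (hYmeas : ∀ t, Measurable (Y t))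
    (hY0 : ∀ᵐ ω ∂P, Y 0 ω = 0)
    (hYindep : ∀ (m : ℕ) (τ : Fin (m + 1) → ℝ), (∀ i, 0 ≤ τ i) → Monotone τ →
      iIndepFun (m := fun _ : Fin m => Real.measurableSpace)
        (fun i ω => Y (τ i.succ) ω - Y (τ i.castSucc) ω) P)
    -- Φ : continuous strictly increasing bijection of [0,∞) onto [0,∞)
    (Φ Φinv : ℝ → ℝ)
    (hΦ0 : Φ 0 = 0)
    (hΦmono : StrictMonoOn Φ (Ici 0))
    (hΦinv : ∀ x ≥ (0:ℝ), Φinv (Φ x) = x ∧ Φ (Φinv x) = x ∧ 0 ≤ Φinv x)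
    (hSV : ∀ l > (0:ℝ), Tendsto (fun x => Φ (l * x) / Φ x) (𝓝[>] 0) (𝓝 1))
    -- (Y_t) is a subordinator with Laplace exponent Φ
    (hLaplace : ∀ s t l : ℝ, 0 ≤ s → s ≤ t → 0 ≤ l →
      ∫ ω, Real.exp (-(l * (Y t ω - Y s ω))) ∂P = Real.exp (-((t - s) * Φ l)))
    (n : ℕ)
    (s : Fin (n + 1) → ℝ) (hs0 : s 0 = 0) (hsmono : StrictMono s)
    (θ x : Fin n → ℝ) (hθ : ∀ j, 0 < θ j) (hx : ∀ j, 0 < x j) :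
    Tendsto
      (fun t => ∫ ω, Real.exp (-(∑ j, θ j * Φinv (x j / t) * Y (s j.succ * t) ω)) ∂P)
      atTop
      (𝓝 (Real.exp (-(∑ i : Fin n, (s i.succ - s i.castSucc) *
        ((Finset.univ.filter fun j => i ≤ j).sup'
          ⟨i, by simp⟩ x))))) := by
  have hmaps : MapsTo Φinv (Ici 0) (Ici 0) := fun y hy => (hΦinv y hy).2.2
  have hinv : RightInvOn Φinv Φ (Ici 0) := fun y hy => (hΦinv y hy).2.1
  have hexponent (i : Fin n) : Tendsto
      (fun t => t * Φ (∑ j ∈ Finset.univ.filter (i ≤ ·), θ j * Φinv (x j / t))) atTop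
      (𝓝 ((Finset.univ.filter fun j => i ≤ j).sup' ⟨i, by simp⟩ x)) :=
    tendsto_mul_apply_sum_mul_apply_div hΦ0 hΦmono hmaps hinv hSV _ (fun j _ => hθ j)
      (fun j _ => hx j)
  refine ((continuous_exp.tendsto _).comp (tendsto_finsetSum _ fun i _ =>
    (hexponent i).const_mul (s i.succ - s i.castSucc)).neg).congr' ?_
  filter_upwards [eventually_gt_atTop 0] with t ht
  have hlaw := integral_exp_neg_sum_mul_eq P Y hYmeas hY0 hYindep Φ hLaplace (fun i => s i * t)
    (by simp [hs0]) (fun i j hij => mul_le_mul_of_nonneg_right (hsmono.monotone hij) ht.le)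
    (fun j => θ j * Φinv (x j / t)) (fun j => mul_nonneg (hθ j).le (hmaps (div_pos (hx j) ht).le))
  rw [Function.comp_apply, hlaw]
  exact congrArg (fun y => Real.exp (-y)) (Finset.sum_congr rfl fun i _ => by ring)
end
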